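/- arXiv:1807.02179 — 5 statements merged into one kernel-verified Lean document; each statement's English description precedes it below -/
import Mathlib

section
/- Let Q be an acyclic quiver with an admissible and ordered Dynkin subquiver partition Q• = {Q¹,…,Q^ℓ}. Suppose for each j the positive roots of Q^j are enumerated β^j₁,…,β^j_{r_j} so that λ(β^j_u,β^j_v) ≥ 0 whenever u < v. Then the concatenated enumeration Φ¹ ≺ Φ² ≺ ⋯ ≺ Φ^ℓ (listing first the roots of Φ¹ in their given order, then those of Φ², etc.) is an allowed total order on Φ(Q,Q•): for u < v in the concatenation, λ(φ_u,φ_v) ≥ 0 when φ_u,φ_v lie in the same Φ^j and λ(φ_u,φ_v) ≤ 0 when they lie in different Φ^j's; moreover in this situation λ_{Q^j₁}(φ_u,φ_v) ≥ 0 and λ_{Q₁∖Q^j₁}(φ_u,φ_v) ≤ 0 for same-block pairs with u < v. -/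
open scoped BigOperators

/-- A quiver on vertex set `Fin n` with `m` arrows, each arrow `a` having a
tail `ta a` and a head `ha a`. -/
structure Quiv (n : ℕ) where
  m : ℕ
  ta : Fin m → Fin n
  ha : Fin m → Fin n

namespace Quiv

variable {n : ℕ}

/-- Coerce a dimension vector in `ℕⁿ` to `ℤⁿ`. -/
def toZ {n : ℕ} (γ : Fin n → ℕ) : Fin n → ℤ := fun i => (γ i : ℤ)

/-- The Euler form of the subquiver with vertex set `V` and arrow set `A`. -/
def chiSub (Q : Quiv n) (V : Finset (Fin n)) (A : Finset (Fin Q.m))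
    (γ₁ γ₂ : Fin n → ℤ) : ℤ :=
  (∑ i ∈ V, γ₁ i * γ₂ i) - ∑ a ∈ A, γ₁ (Q.ta a) * γ₂ (Q.ha a)

/-- The Euler form `χ` of `Q`. -/
def chi (Q : Quiv n) (γ₁ γ₂ : Fin n → ℤ) : ℤ :=
  Q.chiSub Finset.univ Finset.univ γ₁ γ₂

/-- `λ(γ₁,γ₂) = χ(γ₂,γ₁) − χ(γ₁,γ₂)`, the antisymmetrized Euler form. -/
def lam (Q : Quiv n) (γ₁ γ₂ : Fin n → ℤ) : ℤ := Q.chi γ₂ γ₁ - Q.chi γ₁ γ₂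

/-- `λ_A`, the restriction of `λ` to a subset `A` of the arrows. -/
def lamA (Q : Quiv n) (A : Finset (Fin Q.m)) (γ₁ γ₂ : Fin n → ℤ) : ℤ :=
  ∑ a ∈ A, (γ₁ (Q.ta a) * γ₂ (Q.ha a) - γ₂ (Q.ta a) * γ₁ (Q.ha a))

/-- No directed cycle using only arrows from `A`. -/
def AcyclicOn (Q : Quiv n) (A : Finset (Fin Q.m)) : Prop :=
  ¬ ∃ (k : ℕ) (c : ZMod (k + 1) → Fin Q.m),
      (∀ i, c i ∈ A) ∧ ∀ i, Q.ha (c i) = Q.ta (c (i + 1))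

/-- The quiver `Q` is acyclic: it has no directed cycle. -/
def Acyclic (Q : Quiv n) : Prop := Q.AcyclicOn Finset.univ

/-- Undirected adjacency via an arrow from `A`. -/
def AdjOn (Q : Quiv n) (A : Finset (Fin Q.m)) (x y : Fin n) : Prop :=
  ∃ a ∈ A, (Q.ta a = x ∧ Q.ha a = y) ∨ (Q.ta a = y ∧ Q.ha a = x)

/-- The subquiver `(V, A)` is connected as an undirected graph. -/
def ConnectedOn (Q : Quiv n) (V : Finset (Fin n)) (A : Finset (Fin Q.m)) : Prop :=
  ∀ x ∈ V, ∀ y ∈ V, Relation.ReflTransGen (Q.AdjOn A) x y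

/-- The Tits form of the subquiver `(V,A)` is positive definite. -/
def PosDefOn (Q : Quiv n) (V : Finset (Fin n)) (A : Finset (Fin Q.m)) : Prop :=
  ∀ γ : Fin n → ℤ, (∀ i, i ∉ V → γ i = 0) → γ ≠ 0 → 0 < Q.chiSub V A γ γ

/-- The subquiver `(V,A)` is a (nonempty, connected, acyclic, positive-definite
Tits form) Dynkin quiver. -/
def DynkinOn (Q : Quiv n) (V : Finset (Fin n)) (A : Finset (Fin Q.m)) : Prop :=
  V.Nonempty ∧ (∀ a ∈ A, Q.ta a ∈ V ∧ Q.ha a ∈ V) ∧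
    Q.ConnectedOn V A ∧ Q.AcyclicOn A ∧ Q.PosDefOn V A

/-- The set of positive roots of the subquiver `(V,A)`: nonzero dimension
vectors supported on `V` with `χ(β,β) = 1`. -/
def PosRootsOn (Q : Quiv n) (V : Finset (Fin n)) (A : Finset (Fin Q.m)) :
    Set (Fin n → ℕ) :=
  {β | β ≠ 0 ∧ (∀ i, i ∉ V → β i = 0) ∧ Q.chiSub V A (toZ β) (toZ β) = 1}

/-- A Dynkin subquiver partition `Q• = {Q¹,…,Q^ℓ}` of `Q`: each block is a
subquiver `(V j, A j)`, the vertex sets partition `Q₀`, and each block is a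
nonempty connected Dynkin quiver. -/
structure DSP (Q : Quiv n) (ℓ : ℕ) where
  V : Fin ℓ → Finset (Fin n)
  A : Fin ℓ → Finset (Fin Q.m)
  cover : ∀ i : Fin n, ∃! j, i ∈ V j
  dynkin : ∀ j, Q.DynkinOn (V j) (A j)

/-- Arrows of `Q` not belonging to any block, i.e. arrows of the contracted
quiver `P(Q,Q•)`. -/
def DSP.Cut {Q : Quiv n} {ℓ : ℕ} (P : DSP Q ℓ) (a : Fin Q.m) : Prop :=
  ∀ j, a ∉ P.A j

/-- `Q•` is admissible: the contracted quiver `P(Q,Q•)` is acyclic, i.e. there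
is no cyclic sequence of cut arrows in which the block of the head of each
arrow is the block of the tail of the next one. -/
def DSP.Admissible {Q : Quiv n} {ℓ : ℕ} (P : DSP Q ℓ) : Prop :=
  ¬ ∃ (k : ℕ) (c : ZMod (k + 1) → Fin Q.m),
      (∀ i, P.Cut (c i)) ∧
      ∀ i, ∃ j : Fin ℓ, Q.ha (c i) ∈ P.V j ∧ Q.ta (c (i + 1)) ∈ P.V j

/-- `Q•` is ordered: every cut arrow goes from a higher-indexed block (tail)
to a lower-indexed block (head). -/
def DSP.Ordered {Q : Quiv n} {ℓ : ℕ} (P : DSP Q ℓ) : Prop :=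
  ∀ a : Fin Q.m, P.Cut a →
    ∀ j j' : Fin ℓ, Q.ha a ∈ P.V j → Q.ta a ∈ P.V j' → j < j'

/-- `Φ(Q,Q•) = ∪_j Φ^j`. -/
def DSP.Roots {Q : Quiv n} {ℓ : ℕ} (P : DSP Q ℓ) : Set (Fin n → ℕ) :=
  ⋃ j, Q.PosRootsOn (P.V j) (P.A j)

/-- An allowed total order `φ₁ ≺ ⋯ ≺ φ_r` on `Φ(Q,Q•)`: an enumeration such
that for `u < v`, `λ(φ_u,φ_v) ≥ 0` if `φ_u, φ_v` lie in the same `Φ^j` and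
`λ(φ_u,φ_v) ≤ 0` if they lie in different `Φ^j`'s. -/
def DSP.AllowedOrder {Q : Quiv n} {ℓ : ℕ} (P : DSP Q ℓ) {r : ℕ}
    (φ : Fin r → (Fin n → ℕ)) : Prop :=
  Function.Injective φ ∧ Set.range φ = P.Roots ∧
    ∀ u v : Fin r, u < v →
      ((∃ j, φ u ∈ Q.PosRootsOn (P.V j) (P.A j) ∧
          φ v ∈ Q.PosRootsOn (P.V j) (P.A j)) →
        0 ≤ Q.lam (toZ (φ u)) (toZ (φ v))) ∧
      ((¬ ∃ j, φ u ∈ Q.PosRootsOn (P.V j) (P.A j) ∧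
          φ v ∈ Q.PosRootsOn (P.V j) (P.A j)) →
        Q.lam (toZ (φ u)) (toZ (φ v)) ≤ 0)

end Quiv

noncomputable section

open Quiv

/-- The underlying vector space of the completed quantum algebra `Â_Q`:
functions from dimension vectors to `ℚ(t)`. -/
abbrev AQ (n : ℕ) := (Fin n → ℕ) → RatFunc ℚ

/-- The variable `t = q^{1/2}` of `ℚ(t)`. -/
def tq : RatFunc ℚ := RatFunc.X

/-- The unit of `Â_Q`: the indicator function of the zero dimension vector. -/
def oneQ {n : ℕ} : AQ n := fun γ => if γ = 0 then 1 else 0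

/-- The generator `y_γ = −δ_γ` of the quantum algebra. -/
def yQ {n : ℕ} (γ : Fin n → ℕ) : AQ n := fun δ => if δ = γ then -1 else 0

/-- The twisted convolution product of the quantum algebra:
`(f·g)(γ) = Σ_{γ₁+γ₂=γ} t^{λ(γ₁,γ₂)} f(γ₁) g(γ₂)`. -/
def mulQ {n : ℕ} (Q : Quiv n) (f g : AQ n) : AQ n := fun γ =>
  ∑ γ₁ ∈ Finset.Iic γ,
    tq ^ (Q.lam (toZ γ₁) (toZ (γ - γ₁))) * f γ₁ * g (γ - γ₁)

/-- Ordered product of a list of elements of `Â_Q`. -/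
def prodQ {n : ℕ} (Q : Quiv n) (L : List (AQ n)) : AQ n := L.foldr (mulQ Q) oneQ

/-- Power in the quantum algebra. -/
def powQ {n : ℕ} (Q : Quiv n) (f : AQ n) : ℕ → AQ n
  | 0 => oneQ
  | k + 1 => mulQ Q f (powQ Q f k)

/-- `P_k = Π_{j=1}^k (1 − q^j)⁻¹` with `q = t²`, the Poincaré series of
`H^*(BGL(k,ℂ))`. -/
def Pq (k : ℕ) : RatFunc ℚ := ∏ j ∈ Finset.Icc 1 k, (1 - tq ^ (2 * j))⁻¹

/-- The quantum dilogarithm `E(y_γ) = 1 + Σ_{k≥1} (−1)^k t^{k²} P_k y_γ^k`,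
written out as the function supported on the multiples `k • γ`,
with value `t^{k²} P_k` at `k • γ`  (note `y_γ^k = (−1)^k δ_{kγ}`). -/
def Edl {n : ℕ} (γ : Fin n → ℕ) : AQ n := fun δ =>
  ∑ k ∈ Finset.range ((∑ i, δ i) + 1),
    if δ = k • γ then tq ^ (k ^ 2) * Pq k else 0

end

/-- For an admissible and ordered Dynkin subquiver partition of an
acyclic quiver, with each block's roots enumerated so `λ ≥ 0` for earlier-to-later
pairs, the concatenated enumeration `Φ¹ ≺ ⋯ ≺ Φ^ℓ` is an allowed total order:
same-block earlier-to-later pairs have `λ ≥ 0` (and moreover `λ_{Q^j₁} ≥ 0` and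
`λ_{Q₁∖Q^j₁} ≤ 0`), while pairs from blocks `j < j'` have `λ ≤ 0`. -/
theorem statement2 {n ℓ : ℕ} (Q : Quiv n) (hacyc : Q.Acyclic)
    (P : Quiv.DSP Q ℓ) (hadm : P.Admissible) (hord : P.Ordered)
    (r : Fin ℓ → ℕ) (ρ : ∀ j : Fin ℓ, Fin (r j) → (Fin n → ℕ))
    (hinj : ∀ j, Function.Injective (ρ j))
    (hrange : ∀ j, Set.range (ρ j) = Q.PosRootsOn (P.V j) (P.A j))
    (horder : ∀ j, ∀ u v : Fin (r j), u < v →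
      0 ≤ Q.lam (Quiv.toZ (ρ j u)) (Quiv.toZ (ρ j v))) :
    (∀ j, ∀ u v : Fin (r j), u < v →
        0 ≤ Q.lam (Quiv.toZ (ρ j u)) (Quiv.toZ (ρ j v)) ∧
        0 ≤ Q.lamA (P.A j) (Quiv.toZ (ρ j u)) (Quiv.toZ (ρ j v)) ∧
        Q.lamA (Finset.univ \ P.A j) (Quiv.toZ (ρ j u)) (Quiv.toZ (ρ j v)) ≤ 0) ∧
    (∀ j j' : Fin ℓ, j < j' → ∀ u : Fin (r j), ∀ v : Fin (r j'),
        Q.lam (Quiv.toZ (ρ j u)) (Quiv.toZ (ρ j' v)) ≤ 0) := by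
  -- Block vertex sets are disjoint.
  have hdisj : ∀ (i : Fin n) (j j' : Fin ℓ), i ∈ P.V j → i ∈ P.V j' → j = j' := by
    intro i j j' hj hj'
    obtain ⟨j₀, _, huniq⟩ := P.cover i
    rw [huniq j hj, huniq j' hj']
  -- Roots of block j are supported on V j.
  have hsupp : ∀ j (u : Fin (r j)) (i : Fin n), i ∉ P.V j → ρ j u i = 0 := by
    intro j u i hi
    have hmem : ρ j u ∈ Q.PosRootsOn (P.V j) (P.A j) := by
      rw [← hrange j]; exact Set.mem_range_self u
    exact hmem.2.1 i hi
  have hsuppZ : ∀ j (u : Fin (r j)) (i : Fin n), i ∉ P.V j → Quiv.toZ (ρ j u) i = 0 := by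
    intro j u i hi; simp [Quiv.toZ, hsupp j u i hi]
  -- λ equals λ restricted to all arrows.
  have hlam : ∀ γ₁ γ₂ : Fin n → ℤ, Q.lam γ₁ γ₂ = Q.lamA Finset.univ γ₁ γ₂ := by
    intro γ₁ γ₂
    simp only [Quiv.lam, Quiv.chi, Quiv.chiSub, Quiv.lamA, Finset.sum_sub_distrib]
    rw [Finset.sum_congr rfl (fun i _ => mul_comm (γ₂ i) (γ₁ i))]
    ring
  -- Arrows in a block have endpoints in that block's vertex set.
  have hend : ∀ (j : Fin ℓ) (a : Fin Q.m), a ∈ P.A j → Q.ta a ∈ P.V j ∧ Q.ha a ∈ P.V j :=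
    fun j a ha => (P.dynkin j).2.1 a ha
  constructor
  · intro j u v huv
    refine ⟨horder j u v huv, ?_, ?_⟩
    · -- λ_{A j} = λ since arrows outside A j contribute zero.
      have hzero : Q.lamA (Finset.univ \ P.A j) (Quiv.toZ (ρ j u)) (Quiv.toZ (ρ j v)) = 0 := by
        apply Finset.sum_eq_zero
        intro a hmem
        have haA : a ∉ P.A j := (Finset.mem_sdiff.mp hmem).2
        by_cases hta : Q.ta a ∈ P.V j
        · by_cases hha : Q.ha a ∈ P.V j
          · -- both endpoints in V j but a ∉ A j : a is a cut arrow, contradiction with ordered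
            have hcut : P.Cut a := by
              intro j'' ha''
              obtain ⟨hta'', _⟩ := hend j'' a ha''
              exact haA (by rwa [hdisj (Q.ta a) j j'' hta hta''])
            exact absurd (hord a hcut j j hha hta) (lt_irrefl j)
          · rw [hsuppZ j u _ hha, hsuppZ j v _ hha]; ring
        · rw [hsuppZ j u _ hta, hsuppZ j v _ hta]; ring
      have hsplit : Q.lamA (P.A j) (Quiv.toZ (ρ j u)) (Quiv.toZ (ρ j v))
          = Q.lam (Quiv.toZ (ρ j u)) (Quiv.toZ (ρ j v)) := by
        rw [hlam]
        unfold Quiv.lamA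
        rw [← Finset.sum_sdiff (Finset.subset_univ (P.A j))]
        have := hzero
        unfold Quiv.lamA at this
        rw [this, zero_add]
      rw [hsplit]; exact horder j u v huv
    · apply le_of_eq
      apply Finset.sum_eq_zero
      intro a hmem
      have haA : a ∉ P.A j := (Finset.mem_sdiff.mp hmem).2
      by_cases hta : Q.ta a ∈ P.V j
      · by_cases hha : Q.ha a ∈ P.V j
        · have hcut : P.Cut a := by
            intro j'' ha''
            obtain ⟨hta'', _⟩ := hend j'' a ha''
            exact haA (by rwa [hdisj (Q.ta a) j j'' hta hta''])
          exact absurd (hord a hcut j j hha hta) (lt_irrefl j)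
        · rw [hsuppZ j u _ hha, hsuppZ j v _ hha]; ring
      · rw [hsuppZ j u _ hta, hsuppZ j v _ hta]; ring
  · intro j j' hjj' u v
    rw [hlam]
    apply Finset.sum_nonpos
    intro a _
    have h1 : Quiv.toZ (ρ j u) (Q.ta a) * Quiv.toZ (ρ j' v) (Q.ha a) = 0 := by
      by_cases hta : Q.ta a ∈ P.V j
      · by_cases hha : Q.ha a ∈ P.V j'
        · -- arrow from block j to block j' with j < j': impossible
          exfalso
          have hcut : P.Cut a := by
            intro j'' ha''
            obtain ⟨hta'', hha''⟩ := hend j'' a ha''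
            have e1 := hdisj (Q.ta a) j j'' hta hta''
            have e2 := hdisj (Q.ha a) j' j'' hha hha''
            exact (ne_of_lt hjj') (e1.trans e2.symm)
          exact absurd (hord a hcut j' j hha hta) (not_lt.mpr hjj'.le)
        · rw [hsuppZ j' v _ hha]; ring
      · rw [hsuppZ j u _ hta]; ring
    rw [h1]
    have h2 : 0 ≤ Quiv.toZ (ρ j' v) (Q.ta a) * Quiv.toZ (ρ j u) (Q.ha a) :=
      mul_nonneg (Int.ofNat_nonneg _) (Int.ofNat_nonneg _)
    linarith
end

section
/- Let Q be an acyclic quiver with a Dynkin subquiver partition Q• = {Q¹,…,Q^ℓ}. Suppose there exists an enumeration φ₁,…,φ_r of Φ(Q,Q•) satisfying: for all u < v, if φ_u and φ_v lie in the same Φ^j then λ_{Q^j₁}(φ_u,φ_v) ≥ 0 and λ_{Q₁∖Q^j₁}(φ_u,φ_v) ≤ 0, and if φ_u and φ_v lie in different Φ^j's then λ(φ_u,φ_v) ≤ 0. Then Q• is admissible, i.e. the contracted quiver P(Q,Q•) is acyclic (in particular it has no loops, 2-cycles, or longer directed cycles). -/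
open scoped BigOperators

/-!
Suppose the contracted quiver had a cycle of cut arrows `c₀, …, c_k`, the head of `cᵢ` and the
tail of `cᵢ₊₁` lying in the block `Q^{jᵢ}`, and let `F` be the position in the enumeration.
Inside the Dynkin block, join `ha cᵢ` to `ta cᵢ₊₁` by a simple undirected path. Its segments are
roots, and splitting the path into maximal forward runs, the rule `λ_{Q^j₁} ≥ 0` yields roots
`βᵢ ∋ ta cᵢ₊₁`, supported upstream of it, and `γᵢ ∋ ha cᵢ`, supported downstream of it, with
`F βᵢ ≤ F γᵢ`. Since `Q` is acyclic, `λ` restricted to the cut arrows is positive on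
`(βᵢ, γᵢ₊₁)`, and the two remaining rules force `F γᵢ₊₁ < F βᵢ`. So `F γᵢ` strictly decreases
around the cycle, which is absurd.
-/

open Classical in
/-- The position of `x` in `φ`, with junk value `0` when `x` is not in the range of `φ`. -/
noncomputable def enumIndex {α : Type*} {r : ℕ} (φ : Fin r → α) (x : α) : ℕ :=
  if h : ∃ u, φ u = x then h.choose else 0

lemma exists_enumIndex_eq {α : Type*} {r : ℕ} {φ : Fin r → α} {x : α} (hx : x ∈ Set.range φ) :
    ∃ u, φ u = x ∧ enumIndex φ x = u :=
  ⟨hx.choose, hx.choose_spec, by classical exact dif_pos hx⟩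

lemma enumIndex_lt_of_neg {α : Type*} {r : ℕ} {φ : Fin r → α} {S : Set α} (hS : S ⊆ Set.range φ)
    {L : α → α → ℤ} (hL : ∀ x y, L y x = -L x y)
    (hord : ∀ u v, u < v → φ u ∈ S → φ v ∈ S → 0 ≤ L (φ u) (φ v))
    {x y : α} (hx : x ∈ S) (hy : y ∈ S) (hxy : L x y < 0) : enumIndex φ y < enumIndex φ x := by
  obtain ⟨u, rfl, hu⟩ := exists_enumIndex_eq (hS hx)
  obtain ⟨v, rfl, hv⟩ := exists_enumIndex_eq (hS hy)
  rw [hu, hv, Fin.val_fin_lt]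
  rcases lt_trichotomy u v with huv | rfl | hvu
  · exact absurd (hord u v huv hx hy) hxy.not_ge
  · linarith [hL (φ u) (φ u)]
  · exact hvu

lemma ZMod.not_forall_apply_add_one_lt {α : Type*} [Preorder α] {k : ℕ} (f : ZMod (k + 1) → α) :
    ¬ ∀ i, f (i + 1) < f i := by
  intro h
  have hdesc : ∀ s : ℕ, f ((s + 1 : ℕ) : ZMod (k + 1)) < f 0 := by
    intro s
    induction s with
    | zero => simpa using h 0
    | succ s ih =>
      have hs := h ((s + 1 : ℕ) : ZMod (k + 1))
      push_cast at hs ih ⊢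
      exact hs.trans ih
  simpa [ZMod.natCast_self] using hdesc k

namespace Quiv

open Finset Relation

variable {n : ℕ} {Q : Quiv n}

lemma toZ_add (β γ : Fin n → ℕ) : toZ (β + γ) = toZ β + toZ γ :=
  funext fun i => by simp [toZ]

def arrowPairing (Q : Quiv n) (A : Finset (Fin Q.m)) (γ₁ γ₂ : Fin n → ℤ) : ℤ :=
  ∑ a ∈ A, γ₁ (Q.ta a) * γ₂ (Q.ha a)

lemma lamA_eq_arrowPairing_sub (A : Finset (Fin Q.m)) (γ₁ γ₂ : Fin n → ℤ) :
    Q.lamA A γ₁ γ₂ = Q.arrowPairing A γ₁ γ₂ - Q.arrowPairing A γ₂ γ₁ :=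
  sum_sub_distrib _ _

lemma lamA_self (A : Finset (Fin Q.m)) (γ : Fin n → ℤ) : Q.lamA A γ γ = 0 := by
  rw [lamA_eq_arrowPairing_sub, sub_self]

lemma lamA_swap (A : Finset (Fin Q.m)) (γ₁ γ₂ : Fin n → ℤ) :
    Q.lamA A γ₂ γ₁ = -Q.lamA A γ₁ γ₂ := by
  rw [lamA_eq_arrowPairing_sub, lamA_eq_arrowPairing_sub, neg_sub]

lemma lam_eq_lamA_univ (γ₁ γ₂ : Fin n → ℤ) : Q.lam γ₁ γ₂ = Q.lamA univ γ₁ γ₂ := by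
  have hsymm : ∑ i, γ₂ i * γ₁ i = ∑ i, γ₁ i * γ₂ i := sum_congr rfl fun i _ => mul_comm _ _
  rw [lamA_eq_arrowPairing_sub, lam, chi, chi, chiSub, chiSub, hsymm]
  simp only [arrowPairing]
  ring

lemma lamA_eq_of_subset {A B : Finset (Fin Q.m)} (hAB : A ⊆ B) {γ₁ γ₂ : Fin n → ℤ}
    (h : ∀ a ∈ B, a ∉ A →
      (γ₁ (Q.ta a) = 0 ∧ γ₁ (Q.ha a) = 0) ∨ (γ₂ (Q.ta a) = 0 ∧ γ₂ (Q.ha a) = 0)) :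
    Q.lamA A γ₁ γ₂ = Q.lamA B γ₁ γ₂ :=
  sum_subset hAB fun a hB hA => by
    rcases h a hB hA with ⟨h₁, h₂⟩ | ⟨h₁, h₂⟩ <;> simp [h₁, h₂]

lemma chiSub_add_self (V : Finset (Fin n)) (A : Finset (Fin Q.m)) (β γ : Fin n → ℤ) :
    Q.chiSub V A (β + γ) (β + γ) = Q.chiSub V A β β + Q.chiSub V A γ γ
      + 2 * ∑ i ∈ V, β i * γ i - Q.arrowPairing A β γ - Q.arrowPairing A γ β := by
  have hsymm : ∑ i ∈ V, γ i * β i = ∑ i ∈ V, β i * γ i := sum_congr rfl fun i _ => mul_comm _ _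
  simp only [chiSub, arrowPairing, Pi.add_apply, add_mul, mul_add, sum_add_distrib, hsymm]
  ring

lemma arrowPairing_nonneg (A : Finset (Fin Q.m)) (β γ : Fin n → ℕ) :
    0 ≤ Q.arrowPairing A (toZ β) (toZ γ) :=
  sum_nonneg fun a _ => by unfold toZ; positivity

lemma one_le_arrowPairing {A : Finset (Fin Q.m)} {β γ : Fin n → ℕ} {a : Fin Q.m} (ha : a ∈ A)
    (hβ : β (Q.ta a) ≠ 0) (hγ : γ (Q.ha a) ≠ 0) : 1 ≤ Q.arrowPairing A (toZ β) (toZ γ) := by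
  have hterm : 1 ≤ toZ β (Q.ta a) * toZ γ (Q.ha a) := by
    simp only [toZ]
    exact_mod_cast Nat.one_le_iff_ne_zero.2 (mul_ne_zero hβ hγ)
  exact hterm.trans <| single_le_sum (f := fun b => toZ β (Q.ta b) * toZ γ (Q.ha b))
    (fun b _ => by unfold toZ; positivity) ha

lemma chiSub_single_le_one (V : Finset (Fin n)) (A : Finset (Fin Q.m)) (v : Fin n) :
    Q.chiSub V A (toZ (Pi.single v 1)) (toZ (Pi.single v 1)) ≤ 1 := by
  have hV : ∑ i ∈ V, toZ (Pi.single v 1) i * toZ (Pi.single v 1) i = if v ∈ V then 1 else 0 := by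
    simp [toZ, Pi.single_apply]
  have hA := Q.arrowPairing_nonneg A (Pi.single v 1) (Pi.single v 1)
  rw [chiSub, hV]
  simp only [arrowPairing] at hA
  split_ifs <;> linarith

lemma lamA_eq_one_of_add_mem_posRootsOn {V : Finset (Fin n)} {A : Finset (Fin Q.m)}
    {β γ : Fin n → ℕ} (hβ : β ∈ Q.PosRootsOn V A) (hγ : γ ∈ Q.PosRootsOn V A)
    (hβγ : β + γ ∈ Q.PosRootsOn V A) (hdisj : ∀ i, β i = 0 ∨ γ i = 0)
    {a : Fin Q.m} (ha : a ∈ A) (hβa : β (Q.ta a) ≠ 0) (hγa : γ (Q.ha a) ≠ 0) :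
    Q.lamA A (toZ β) (toZ γ) = 1 := by
  have hV : ∑ i ∈ V, toZ β i * toZ γ i = 0 :=
    sum_eq_zero fun i _ => by rcases hdisj i with h | h <;> simp [toZ, h]
  have key := Q.chiSub_add_self V A (toZ β) (toZ γ)
  rw [← toZ_add, hβ.2.2, hγ.2.2, hβγ.2.2, hV] at key
  have h₁ := one_le_arrowPairing ha hβa hγa
  have h₂ := Q.arrowPairing_nonneg A γ β
  rw [lamA_eq_arrowPairing_sub]
  linarith

lemma mem_posRootsOn_of_chiSub_le_one {V : Finset (Fin n)} {A : Finset (Fin Q.m)}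
    (hpos : Q.PosDefOn V A) {β : Fin n → ℕ} (hβ : β ≠ 0) (hsupp : ∀ i, i ∉ V → β i = 0)
    (hle : Q.chiSub V A (toZ β) (toZ β) ≤ 1) : β ∈ Q.PosRootsOn V A := by
  have hβZ : toZ β ≠ 0 := fun h => hβ <| funext fun i => by
    simpa [toZ] using congrFun h i
  have hlt := hpos (toZ β) (fun i hi => by simp [toZ, hsupp i hi]) hβZ
  exact ⟨hβ, hsupp, by omega⟩

def ArrowOn (Q : Quiv n) (A : Finset (Fin Q.m)) (x y : Fin n) : Prop :=
  ∃ a ∈ A, Q.ta a = x ∧ Q.ha a = y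

lemma ArrowOn.mono {A B : Finset (Fin Q.m)} (hAB : A ⊆ B) {x y : Fin n}
    (h : Q.ArrowOn A x y) : Q.ArrowOn B x y :=
  let ⟨a, ha, hxy⟩ := h
  ⟨a, hAB ha, hxy⟩

lemma reflTransGen_arrowOn_mono {A B : Finset (Fin Q.m)} (hAB : A ⊆ B) {x y : Fin n}
    (h : ReflTransGen (Q.ArrowOn A) x y) : ReflTransGen (Q.ArrowOn B) x y :=
  ReflTransGen.mono (fun _ _ => ArrowOn.mono hAB) _ _ h

lemma adjOn_iff {A : Finset (Fin Q.m)} {x y : Fin n} :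
    Q.AdjOn A x y ↔ Q.ArrowOn A x y ∨ Q.ArrowOn A y x := by
  simp only [AdjOn, ArrowOn, ← exists_or, and_or_left]

lemma exists_arrow_chain_of_transGen {A : Finset (Fin Q.m)} {u v : Fin n}
    (h : TransGen (Q.ArrowOn A) u v) :
    ∃ (k : ℕ) (g : ℕ → Fin Q.m), (∀ i, g i ∈ A) ∧ (∀ i < k, Q.ha (g i) = Q.ta (g (i + 1))) ∧
      Q.ta (g 0) = u ∧ Q.ha (g k) = v := by
  induction h with
  | single h =>
    obtain ⟨a, ha, hu, hv⟩ := h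
    exact ⟨0, fun _ => a, fun _ => ha, fun i hi => absurd hi (Nat.not_lt_zero i), hu, hv⟩
  | tail _ hvw ih =>
    obtain ⟨k, g, hA, hchain, hu, hv⟩ := ih
    obtain ⟨a, ha, hva, hwa⟩ := hvw
    refine ⟨k + 1, fun i => if i ≤ k then g i else a, fun i => ?_, fun i hi => ?_, by simpa,
      by simpa⟩
    · dsimp only
      split_ifs
      exacts [hA i, ha]
    · rcases Nat.lt_or_eq_of_le (Nat.le_of_lt_succ hi) with hik | rfl
      · simpa [hik.le, Nat.succ_le_of_lt hik] using hchain i hik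
      · simpa [hv] using hva.symm

lemma AcyclicOn.not_transGen {A : Finset (Fin Q.m)} (h : Q.AcyclicOn A) (v : Fin n) :
    ¬ TransGen (Q.ArrowOn A) v v := by
  intro hvv
  obtain ⟨k, g, hA, hchain, h₀, hk⟩ := exists_arrow_chain_of_transGen hvv
  refine h ⟨k, fun i => g i.val, fun i => hA _, fun i => ?_⟩
  have hsucc : (i + 1).val = (i.val + 1) % (k + 1) := by
    rw [← ZMod.val_natCast, Nat.cast_add, ZMod.natCast_zmod_val, Nat.cast_one]
  dsimp only
  rcases Nat.lt_or_eq_of_le (Nat.le_of_lt_succ (ZMod.val_lt i)) with hi | hi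
  · rw [hsucc, Nat.mod_eq_of_lt (by omega)]
    exact hchain _ hi
  · rw [hsucc, hi, Nat.mod_self, hk, h₀]

section Paths

variable {V : Finset (Fin n)} {A : Finset (Fin Q.m)}

/-- The values of `vtx` beyond `len` are junk. -/
structure SimplePath (Q : Quiv n) (V : Finset (Fin n)) (A : Finset (Fin Q.m)) where
  len : ℕ
  vtx : ℕ → Fin n
  vtx_mem : ∀ t ≤ len, vtx t ∈ V
  vtx_inj : ∀ s ≤ len, ∀ t ≤ len, vtx s = vtx t → s = t
  adj : ∀ t < len, Q.AdjOn A (vtx t) (vtx (t + 1))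

lemma exists_simplePath (hA : ∀ a ∈ A, Q.ta a ∈ V ∧ Q.ha a ∈ V) {y x : Fin n} (hy : y ∈ V)
    (hyx : ReflTransGen (Q.AdjOn A) y x) :
    ∃ w : SimplePath Q V A, w.vtx 0 = y ∧ w.vtx w.len = x := by
  induction hyx with
  | refl => exact ⟨⟨0, fun _ => y, fun _ _ => hy, fun _ hs _ ht _ => by omega,
      fun _ ht => absurd ht (Nat.not_lt_zero _)⟩, rfl, rfl⟩
  | @tail x z _ hxz ih =>
    obtain ⟨w, h₀, hlen⟩ := ih
    by_cases hz : ∃ k ≤ w.len, w.vtx k = z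
    · obtain ⟨k, hk, rfl⟩ := hz
      exact ⟨⟨k, w.vtx, fun t ht => w.vtx_mem t (ht.trans hk),
        fun s hs t ht => w.vtx_inj s (hs.trans hk) t (ht.trans hk),
        fun t ht => w.adj t (ht.trans_le hk)⟩, h₀, rfl⟩
    push Not at hz
    have hzV : z ∈ V := by
      obtain ⟨a, ha, ⟨-, rfl⟩ | ⟨rfl, -⟩⟩ := hxz
      exacts [(hA a ha).2, (hA a ha).1]
    refine ⟨⟨w.len + 1, fun t => if t ≤ w.len then w.vtx t else z, fun t ht => ?_,
      fun s hs t ht hst => ?_, fun t ht => ?_⟩, by simpa using h₀, by simp⟩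
    · split_ifs
      exacts [w.vtx_mem t ‹_›, hzV]
    · split_ifs at hst with h₁ h₂ h₂
      · exact w.vtx_inj s h₁ t h₂ hst
      · exact absurd hst (hz s h₁)
      · exact absurd hst.symm (hz t h₂)
      · omega
    · rcases Nat.lt_or_eq_of_le (Nat.le_of_lt_succ ht) with ht | rfl
      · simpa [ht.le, Nat.succ_le_of_lt ht] using w.adj t ht
      · simpa [hlen] using hxz

namespace SimplePath

variable (w : SimplePath Q V A)

def IsFwd (t : ℕ) : Prop := Q.ArrowOn A (w.vtx t) (w.vtx (t + 1))

def seg (s t : ℕ) : Fin n → ℕ := ∑ k ∈ Ico s t, Pi.single (w.vtx k) 1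

lemma seg_self (s : ℕ) : w.seg s s = 0 := by simp [seg]

lemma seg_succ {s t : ℕ} (hst : s ≤ t) :
    w.seg s (t + 1) = w.seg s t + Pi.single (w.vtx t) 1 :=
  sum_Ico_succ_top hst _

lemma seg_add_seg {s t u : ℕ} (hst : s ≤ t) (htu : t ≤ u) : w.seg s t + w.seg t u = w.seg s u :=
  sum_Ico_consecutive _ hst htu

lemma seg_apply_eq_zero_iff {s t : ℕ} {i : Fin n} :
    w.seg s t i = 0 ↔ ∀ k ∈ Ico s t, w.vtx k ≠ i := by
  simp only [seg, Finset.sum_apply, sum_eq_zero_iff, Pi.single_apply, ne_eq, one_ne_zero,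
    ite_eq_right_iff, imp_false]
  exact forall₂_congr fun k _ => ⟨fun h he => h he.symm, fun h he => h he.symm⟩

lemma exists_vtx_of_seg_ne_zero {s t : ℕ} {i : Fin n} (h : w.seg s t i ≠ 0) :
    ∃ k ∈ Ico s t, w.vtx k = i := by
  by_contra! h'
  exact h (w.seg_apply_eq_zero_iff.2 h')

lemma seg_vtx_ne_zero {s t k : ℕ} (hk : k ∈ Ico s t) : w.seg s t (w.vtx k) ≠ 0 :=
  fun h => (w.seg_apply_eq_zero_iff.1 h k hk) rfl

lemma seg_vtx_eq_zero {s t k : ℕ} (ht : t ≤ w.len + 1) (hk : k ≤ w.len) (hks : k ∉ Ico s t) :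
    w.seg s t (w.vtx k) = 0 :=
  w.seg_apply_eq_zero_iff.2 fun l hl hlk =>
    hks (w.vtx_inj l (by grind) k hk hlk ▸ hl)

lemma seg_disjoint {s t u : ℕ} (htu : t ≤ u) (hu : u ≤ w.len + 1) (i : Fin n) :
    w.seg s t i = 0 ∨ w.seg t u i = 0 := by
  by_contra! h
  obtain ⟨k, hk, rfl⟩ := w.exists_vtx_of_seg_ne_zero h.1
  have hkt := (mem_Ico.1 hk).2
  exact h.2 (w.seg_vtx_eq_zero hu (by omega) (by simp; omega))

/-- Appending a vertex adds at most `1` to the Euler form and the arrow joining it to the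
segment subtracts at least `1`. -/
lemma chiSub_seg_le_one {s t : ℕ} (hst : s < t) (ht : t ≤ w.len + 1) :
    Q.chiSub V A (toZ (w.seg s t)) (toZ (w.seg s t)) ≤ 1 := by
  induction t, hst using Nat.le_induction with
  | base => simpa [w.seg_succ le_rfl, w.seg_self] using Q.chiSub_single_le_one V A (w.vtx s)
  | succ t hst ih =>
    obtain ⟨d, rfl⟩ := Nat.exists_eq_add_of_lt hst
    set σ := w.seg s (s + d + 1)
    set e : Fin n → ℕ := Pi.single (w.vtx (s + d + 1)) 1
    have hσ₀ : σ (w.vtx (s + d + 1)) = 0 := w.seg_vtx_eq_zero (by omega) (by omega) (by simp)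
    have hdisj : ∑ i ∈ V, toZ σ i * toZ e i = 0 := by
      refine sum_eq_zero fun i _ => ?_
      by_cases hi : i = w.vtx (s + d + 1)
      · simp [toZ, hi, hσ₀]
      · simp [e, toZ, hi]
    have hcross : 1 ≤ Q.arrowPairing A (toZ σ) (toZ e) + Q.arrowPairing A (toZ e) (toZ σ) := by
      have hσ : σ (w.vtx (s + d)) ≠ 0 := w.seg_vtx_ne_zero (by simp)
      have he : e (w.vtx (s + d + 1)) ≠ 0 := by simp [e]
      rcases adjOn_iff.1 (w.adj (s + d) (by omega)) with ⟨a, ha, hta, hha⟩ | ⟨a, ha, hta, hha⟩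
      · linarith [one_le_arrowPairing ha (hta ▸ hσ) (hha ▸ he), Q.arrowPairing_nonneg A e σ]
      · linarith [one_le_arrowPairing ha (hta ▸ he) (hha ▸ hσ), Q.arrowPairing_nonneg A σ e]
    rw [w.seg_succ (by omega), toZ_add, chiSub_add_self, hdisj]
    linarith [ih (by omega), Q.chiSub_single_le_one V A (w.vtx (s + d + 1))]

lemma seg_mem_posRootsOn (hpos : Q.PosDefOn V A) {s t : ℕ} (hst : s < t) (ht : t ≤ w.len + 1) :
    w.seg s t ∈ Q.PosRootsOn V A :=
  mem_posRootsOn_of_chiSub_le_one hpos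
    (fun h => w.seg_vtx_ne_zero (mem_Ico.2 ⟨le_rfl, hst⟩) (congrFun h _))
    (fun _ hi => w.seg_apply_eq_zero_iff.2 fun k hk hki =>
      hi (hki ▸ w.vtx_mem k (by have := (mem_Ico.1 hk).2; omega)))
    (w.chiSub_seg_le_one hst ht)

lemma exists_fwd_run {q : ℕ} (hq : q ≤ w.len) :
    ∃ p ≤ q, (∀ t, p ≤ t → t < q → w.IsFwd t) ∧
      (p = 0 ∨ ∃ p', p = p' + 1 ∧ Q.ArrowOn A (w.vtx (p' + 1)) (w.vtx p')) := by
  induction q with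
  | zero => exact ⟨0, le_rfl, fun t h₁ h₂ => by omega, Or.inl rfl⟩
  | succ q ih =>
    rcases adjOn_iff.1 (w.adj q (by omega)) with hfwd | hbwd
    · obtain ⟨p, hpq, hrun, hstart⟩ := ih (by omega)
      refine ⟨p, by omega, fun t hpt htq => ?_, hstart⟩
      rcases Nat.lt_or_eq_of_le (Nat.le_of_lt_succ htq) with htq | rfl
      exacts [hrun t hpt htq, hfwd]
    · exact ⟨q + 1, le_rfl, fun t h₁ h₂ => by omega, Or.inr ⟨q, rfl, hbwd⟩⟩

lemma reflTransGen_of_isFwd {s t : ℕ} (hst : s ≤ t) (hfwd : ∀ k, s ≤ k → k < t → w.IsFwd k) :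
    ReflTransGen (Q.ArrowOn A) (w.vtx s) (w.vtx t) := by
  induction t, hst using Nat.le_induction with
  | base => exact ReflTransGen.refl
  | succ t hst ih =>
    exact (ih fun k h₁ h₂ => hfwd k h₁ (by omega)).tail (hfwd t hst (by omega))

variable {α : Type*} [Preorder α] (F : (Fin n → ℕ) → α)

/-- A backward arrow `vtx (p + 1) → vtx p` gives `λ_A(seg (p + 1) _, seg _ (p + 1)) = 1`, so `F`
drops from each forward run to the one before it. -/
lemma exists_le_initial_run (hpos : Q.PosDefOn V A)
    (hF : ∀ β ∈ Q.PosRootsOn V A, ∀ γ ∈ Q.PosRootsOn V A,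
      0 < Q.lamA A (toZ β) (toZ γ) → F β < F γ) {q : ℕ} (hq : q ≤ w.len) :
    ∃ p ≤ q, (∀ t, p ≤ t → t < q → w.IsFwd t) ∧
      ∃ u ≤ w.len, (∀ t < u, w.IsFwd t) ∧ F (w.seg p (q + 1)) ≤ F (w.seg 0 (u + 1)) := by
  induction q using Nat.strong_induction_on with
  | _ q ih =>
    obtain ⟨p, hpq, hrun, rfl | ⟨p, rfl, a, ha, hta, hha⟩⟩ := w.exists_fwd_run hq
    · exact ⟨0, hpq, hrun, q, hq, fun t ht => hrun t (Nat.zero_le t) ht, le_rfl⟩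
    obtain ⟨p₀, hp₀, -, u, hu, hinit, hle⟩ := ih p (by omega) (by omega)
    have hlam : Q.lamA A (toZ (w.seg (p + 1) (q + 1))) (toZ (w.seg p₀ (p + 1))) = 1 := by
      refine lamA_eq_one_of_add_mem_posRootsOn (w.seg_mem_posRootsOn hpos (by omega) (by omega))
        (w.seg_mem_posRootsOn hpos (by omega) (by omega)) ?_
        (fun i => (w.seg_disjoint (by omega) (by omega) i).symm) ha
        (hta ▸ w.seg_vtx_ne_zero (by simp; omega)) (hha ▸ w.seg_vtx_ne_zero (by simp; omega))
      rw [add_comm, w.seg_add_seg (by omega) (by omega)]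
      exact w.seg_mem_posRootsOn hpos (by omega) (by omega)
    refine ⟨p + 1, hpq, hrun, u, hu, hinit, le_trans (le_of_lt ?_) hle⟩
    exact hF _ (w.seg_mem_posRootsOn hpos (by omega) (by omega)) _
      (w.seg_mem_posRootsOn hpos (by omega) (by omega)) (by rw [hlam]; exact one_pos)

end SimplePath

theorem exists_roots_of_reflTransGen {α : Type*} [Preorder α] (F : (Fin n → ℕ) → α)
    (hA : ∀ a ∈ A, Q.ta a ∈ V ∧ Q.ha a ∈ V) (hpos : Q.PosDefOn V A)
    (hF : ∀ β ∈ Q.PosRootsOn V A, ∀ γ ∈ Q.PosRootsOn V A,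
      0 < Q.lamA A (toZ β) (toZ γ) → F β < F γ)
    {y x : Fin n} (hy : y ∈ V) (hyx : ReflTransGen (Q.AdjOn A) y x) :
    ∃ β ∈ Q.PosRootsOn V A, ∃ γ ∈ Q.PosRootsOn V A, F β ≤ F γ ∧ β x ≠ 0 ∧ γ y ≠ 0 ∧
      (∀ i, β i ≠ 0 → ReflTransGen (Q.ArrowOn A) i x) ∧
      (∀ i, γ i ≠ 0 → ReflTransGen (Q.ArrowOn A) y i) := by
  obtain ⟨w, rfl, rfl⟩ := exists_simplePath hA hy hyx
  obtain ⟨p, hp, hrun, u, hu, hinit, hle⟩ := w.exists_le_initial_run F hpos hF le_rfl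
  refine ⟨w.seg p (w.len + 1), w.seg_mem_posRootsOn hpos (by omega) le_rfl,
    w.seg 0 (u + 1), w.seg_mem_posRootsOn hpos (by omega) (by omega), hle,
    w.seg_vtx_ne_zero (by simp; omega), w.seg_vtx_ne_zero (by simp), fun i hi => ?_,
    fun i hi => ?_⟩
  · obtain ⟨k, hk, rfl⟩ := w.exists_vtx_of_seg_ne_zero hi
    rw [mem_Ico] at hk
    exact w.reflTransGen_of_isFwd (by omega) fun t h₁ h₂ => hrun t (hk.1.trans h₁) h₂
  · obtain ⟨k, hk, rfl⟩ := w.exists_vtx_of_seg_ne_zero hi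
    rw [mem_Ico] at hk
    exact w.reflTransGen_of_isFwd (Nat.zero_le k) fun t _ h₂ => hinit t (by omega)

end Paths

lemma lamA_pos_of_reach (hacyc : Q.Acyclic) {C : Finset (Fin Q.m)} {c : Fin Q.m} (hc : c ∈ C)
    {β γ : Fin n → ℕ} (hβc : β (Q.ta c) ≠ 0) (hγc : γ (Q.ha c) ≠ 0)
    (hβ : ∀ i, β i ≠ 0 → ReflTransGen (Q.ArrowOn univ) i (Q.ta c))
    (hγ : ∀ i, γ i ≠ 0 → ReflTransGen (Q.ArrowOn univ) (Q.ha c) i) :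
    0 < Q.lamA C (toZ β) (toZ γ) := by
  have hback : Q.arrowPairing C (toZ γ) (toZ β) = 0 := by
    refine sum_eq_zero fun d _ => ?_
    -- otherwise `ha d ⇝ ta c → ha c ⇝ ta d → ha d` is a directed cycle
    by_contra hne
    have hγd : γ (Q.ta d) ≠ 0 := fun h => hne (by simp [toZ, h])
    have hβd : β (Q.ha d) ≠ 0 := fun h => hne (by simp [toZ, h])
    exact AcyclicOn.not_transGen hacyc (Q.ha d) <|
      (TransGen.tail' (hβ _ hβd) ⟨c, mem_univ c, rfl, rfl⟩).trans
        (TransGen.tail' (hγ _ hγd) ⟨d, mem_univ d, rfl, rfl⟩)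
  rw [lamA_eq_arrowPairing_sub, hback, sub_zero]
  exact one_le_arrowPairing hc hβc hγc

section Partition

variable {ℓ : ℕ} (P : DSP Q ℓ)

def cutArrows : Finset (Fin Q.m) := univ.filter fun a => ∀ j, a ∉ P.A j

lemma mem_cutArrows {a : Fin Q.m} : a ∈ cutArrows P ↔ P.Cut a := by
  simp [cutArrows, DSP.Cut]

variable {P}

lemma toZ_ends_eq_zero_of_ne {j j' : Fin ℓ} (hjj' : j' ≠ j) {β : Fin n → ℕ}
    (hβ : β ∈ Q.PosRootsOn (P.V j) (P.A j)) {a : Fin Q.m} (ha : a ∈ P.A j') :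
    toZ β (Q.ta a) = 0 ∧ toZ β (Q.ha a) = 0 := by
  have hV := (P.dynkin j').2.1 a ha
  have hout : ∀ {i}, i ∈ P.V j' → i ∉ P.V j := fun hi hi' => hjj' ((P.cover _).unique hi hi')
  simp [toZ, hβ.2.1 _ (hout hV.1), hβ.2.1 _ (hout hV.2)]

lemma lamA_cutArrows_eq_sdiff {j : Fin ℓ} {β : Fin n → ℕ}
    (hβ : β ∈ Q.PosRootsOn (P.V j) (P.A j)) (γ : Fin n → ℤ) :
    Q.lamA (cutArrows P) (toZ β) γ = Q.lamA (univ \ P.A j) (toZ β) γ := by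
  refine lamA_eq_of_subset (fun a ha => ?_) fun a ha hcut => ?_
  · exact mem_sdiff.2 ⟨mem_univ a, (mem_cutArrows P).1 ha j⟩
  · obtain ⟨j', hj'⟩ : ∃ j', a ∈ P.A j' := by simpa [cutArrows] using hcut
    exact Or.inl (toZ_ends_eq_zero_of_ne
      (fun h : j' = j => (mem_sdiff.1 ha).2 (h ▸ hj')) hβ hj')

lemma lamA_cutArrows_eq_lam {j₁ j₂ : Fin ℓ} {β γ : Fin n → ℕ}
    (hβ : β ∈ Q.PosRootsOn (P.V j₁) (P.A j₁)) (hγ : γ ∈ Q.PosRootsOn (P.V j₂) (P.A j₂))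
    (hsep : ¬ ∃ j, β ∈ Q.PosRootsOn (P.V j) (P.A j) ∧ γ ∈ Q.PosRootsOn (P.V j) (P.A j)) :
    Q.lamA (cutArrows P) (toZ β) (toZ γ) = Q.lam (toZ β) (toZ γ) := by
  rw [lam_eq_lamA_univ]
  refine lamA_eq_of_subset (subset_univ _) fun a _ hcut => ?_
  obtain ⟨j', hj'⟩ : ∃ j', a ∈ P.A j' := by simpa [cutArrows] using hcut
  by_cases h₁ : j' = j₁
  · subst h₁
    exact Or.inr (toZ_ends_eq_zero_of_ne (fun h : j' = j₂ => hsep ⟨_, hβ, h ▸ hγ⟩) hγ hj')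
  · exact Or.inl (toZ_ends_eq_zero_of_ne h₁ hβ hj')

lemma lamA_cutArrows_nonpos {β γ : Fin n → ℕ} (hβ : β ∈ P.Roots) (hγ : γ ∈ P.Roots)
    (hsame : ∀ j, β ∈ Q.PosRootsOn (P.V j) (P.A j) → γ ∈ Q.PosRootsOn (P.V j) (P.A j) →
      Q.lamA (univ \ P.A j) (toZ β) (toZ γ) ≤ 0)
    (hdiff : (¬ ∃ j, β ∈ Q.PosRootsOn (P.V j) (P.A j) ∧ γ ∈ Q.PosRootsOn (P.V j) (P.A j)) →
      Q.lam (toZ β) (toZ γ) ≤ 0) :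
    Q.lamA (cutArrows P) (toZ β) (toZ γ) ≤ 0 := by
  obtain ⟨j₁, hβ₁⟩ := Set.mem_iUnion.1 hβ
  obtain ⟨j₂, hγ₂⟩ := Set.mem_iUnion.1 hγ
  by_cases hsep : ∃ j, β ∈ Q.PosRootsOn (P.V j) (P.A j) ∧ γ ∈ Q.PosRootsOn (P.V j) (P.A j)
  · obtain ⟨j, hβj, hγj⟩ := hsep
    rw [lamA_cutArrows_eq_sdiff hβj]
    exact hsame j hβj hγj
  · rw [lamA_cutArrows_eq_lam hβ₁ hγ₂ hsep]
    exact hdiff hsep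

end Partition

end Quiv

open Quiv

theorem statement3_general {n ℓ r : ℕ} (Q : Quiv n) (hacyc : Q.Acyclic)
    (P : Quiv.DSP Q ℓ)
    (φ : Fin r → (Fin n → ℕ))
    (hrange : Set.range φ = P.Roots)
    (hsame : ∀ u v : Fin r, u < v → ∀ j : Fin ℓ,
      φ u ∈ Q.PosRootsOn (P.V j) (P.A j) → φ v ∈ Q.PosRootsOn (P.V j) (P.A j) →
        0 ≤ Q.lamA (P.A j) (Quiv.toZ (φ u)) (Quiv.toZ (φ v)) ∧
        Q.lamA (Finset.univ \ P.A j) (Quiv.toZ (φ u)) (Quiv.toZ (φ v)) ≤ 0)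
    (hdiff : ∀ u v : Fin r, u < v →
      (¬ ∃ j : Fin ℓ, φ u ∈ Q.PosRootsOn (P.V j) (P.A j) ∧
          φ v ∈ Q.PosRootsOn (P.V j) (P.A j)) →
        Q.lam (Quiv.toZ (φ u)) (Quiv.toZ (φ v)) ≤ 0) :
    P.Admissible := by
  rintro ⟨k, c, hcut, hblk⟩
  choose j hhead htail using hblk
  have hblock : ∀ j, ∀ β ∈ Q.PosRootsOn (P.V j) (P.A j), ∀ γ ∈ Q.PosRootsOn (P.V j) (P.A j),
      0 < Q.lamA (P.A j) (toZ β) (toZ γ) → enumIndex φ β < enumIndex φ γ :=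
    fun j β hβ γ hγ hβγ => enumIndex_lt_of_neg
      (hrange.ge.trans' (Set.subset_iUnion (fun j => Q.PosRootsOn (P.V j) (P.A j)) j))
      (L := fun x y => Q.lamA (P.A j) (toZ x) (toZ y)) (fun _ _ => lamA_swap _ _ _)
      (fun u v huv hu hv => (hsame u v huv j hu hv).1) hγ hβ
      (by rw [lamA_swap]; exact neg_neg_of_pos hβγ)
  have hcross : ∀ β ∈ P.Roots, ∀ γ ∈ P.Roots,
      0 < Q.lamA (cutArrows P) (toZ β) (toZ γ) → enumIndex φ γ < enumIndex φ β :=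
    fun β hβ γ hγ hβγ => enumIndex_lt_of_neg hrange.ge
      (L := fun x y => -Q.lamA (cutArrows P) (toZ x) (toZ y))
      (fun _ _ => by rw [lamA_swap, neg_neg])
      (fun u v huv hu hv => neg_nonneg.2 <| lamA_cutArrows_nonpos hu hv
        (fun j hj hj' => (hsame u v huv j hj hj').2) (hdiff u v huv))
      hβ hγ (neg_neg_of_pos hβγ)
  choose β hβ γ hγ hle hβx hγy hβup hγdown using fun i =>
    exists_roots_of_reflTransGen (enumIndex φ) (P.dynkin (j i)).2.1 (P.dynkin (j i)).2.2.2.2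
      (hblock (j i)) (hhead i) ((P.dynkin (j i)).2.2.1 _ (hhead i) _ (htail i))
  refine ZMod.not_forall_apply_add_one_lt (fun i => enumIndex φ (γ i)) fun i => ?_
  have hcut_pos := lamA_pos_of_reach hacyc ((mem_cutArrows P).2 (hcut (i + 1)))
    (hβx i) (hγy (i + 1))
    (fun x hx => reflTransGen_arrowOn_mono (Finset.subset_univ _) (hβup i x hx))
    (fun x hx => reflTransGen_arrowOn_mono (Finset.subset_univ _) (hγdown (i + 1) x hx))
  exact (hcross _ (Set.mem_iUnion.2 ⟨_, hβ i⟩) _ (Set.mem_iUnion.2 ⟨_, hγ (i + 1)⟩)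
    hcut_pos).trans_le (hle i)

/-- If a Dynkin subquiver partition `Q•` of an acyclic quiver `Q`
admits an enumeration `φ₁,…,φ_r` of `Φ(Q,Q•)` satisfying the ordering rules
(for `u < v`: `λ_{Q^j₁}(φ_u,φ_v) ≥ 0` and `λ_{Q₁∖Q^j₁}(φ_u,φ_v) ≤ 0` for
same-block pairs, `λ(φ_u,φ_v) ≤ 0` for different-block pairs), then `Q•` is
admissible, i.e. the contracted quiver `P(Q,Q•)` is acyclic. -/
theorem statement3 {n ℓ r : ℕ} (Q : Quiv n) (hacyc : Q.Acyclic)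
    (P : Quiv.DSP Q ℓ)
    (φ : Fin r → (Fin n → ℕ)) (hinj : Function.Injective φ)
    (hrange : Set.range φ = P.Roots)
    (hsame : ∀ u v : Fin r, u < v → ∀ j : Fin ℓ,
      φ u ∈ Q.PosRootsOn (P.V j) (P.A j) → φ v ∈ Q.PosRootsOn (P.V j) (P.A j) →
        0 ≤ Q.lamA (P.A j) (Quiv.toZ (φ u)) (Quiv.toZ (φ v)) ∧
        Q.lamA (Finset.univ \ P.A j) (Quiv.toZ (φ u)) (Quiv.toZ (φ v)) ≤ 0)
    (hdiff : ∀ u v : Fin r, u < v →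
      (¬ ∃ j : Fin ℓ, φ u ∈ Q.PosRootsOn (P.V j) (P.A j) ∧
          φ v ∈ Q.PosRootsOn (P.V j) (P.A j)) →
        Q.lam (Quiv.toZ (φ u)) (Quiv.toZ (φ v)) ≤ 0) :
    P.Admissible :=
  statement3_general Q hacyc P φ hrange hsame hdiff
end

section
/- Let Q be an acyclic quiver on vertices {1,…,n}, labeled so that h(a) < t(a) for every arrow a; let Q• be an admissible Dynkin subquiver partition with allowed total order φ₁ ≺ ⋯ ≺ φ_r on Φ(Q,Q•); let γ ∈ ℕⁿ and let m = (m₁,…,m_r) ∈ ℕ^r be a compatible Kostant series, i.e. Σ_{u=1}^r m_u φ_u = γ. Then in the quantum algebra, y_{φ₁}^{m₁} y_{φ₂}^{m₂} ⋯ y_{φ_r}^{m_r} = (−1)^{s_m} · t^{2w_m} · y_{e₁}^{γ(1)} ⋯ y_{e_n}^{γ(n)}, where s_m = Σ_{u=1}^r m_u((Σ_{i=1}^n φ_u(i)) − 1) and 2w_m = Σ_{u<v} m_u m_v λ(φ_u,φ_v) − Σ_{i<i'} γ(i)γ(i') λ(e_i,e_{i'}); moreover the integer 2w_m − Σ_{i=1}^n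 γ(i)² + Σ_{u=1}^r m_u² is even and nonnegative (it equals twice the complex codimension of the quiver stratum η_m in Rep_γ(Q)). -/
open scoped BigOperators

/-- `s_m = Σ_{u=1}^r m_u((Σ_i φ_u(i)) − 1)`. -/
def smExp {n r : ℕ} (φ : Fin r → (Fin n → ℕ)) (μ : Fin r → ℕ) : ℤ :=
  ∑ u : Fin r, (μ u : ℤ) * ((∑ i : Fin n, (φ u i : ℤ)) - 1)

/-- `2w_m = Σ_{u<v} m_u m_v λ(φ_u,φ_v) − Σ_{i<i'} γ(i)γ(i') λ(e_i,e_{i'})`. -/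
def w2Exp {n r : ℕ} (Q : Quiv n) (φ : Fin r → (Fin n → ℕ)) (μ : Fin r → ℕ)
    (γ : Fin n → ℕ) : ℤ :=
  (∑ u : Fin r, ∑ v : Fin r, if u < v then
      (μ u : ℤ) * (μ v : ℤ) * Q.lam (Quiv.toZ (φ u)) (Quiv.toZ (φ v)) else 0) -
  ∑ i : Fin n, ∑ i' : Fin n, if i < i' then
      (γ i : ℤ) * (γ i' : ℤ) *
        Q.lam (Quiv.toZ (Pi.single i 1)) (Quiv.toZ (Pi.single i' 1)) else 0

section S4Aux
open Quiv

namespace S4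

variable {n : ℕ}

lemma tq_ne : (tq : RatFunc ℚ) ≠ 0 := RatFunc.X_ne_zero

lemma toZ_sum {ι : Type*} (S : Finset ι) (g : ι → (Fin n → ℕ)) :
    toZ (∑ v ∈ S, g v) = ∑ v ∈ S, toZ (g v) := by
  funext i
  simp only [Quiv.toZ, Finset.sum_apply]
  push_cast
  rfl

lemma toZ_nsmul (k : ℕ) (β : Fin n → ℕ) : toZ (k • β) = (k : ℤ) • toZ β := by
  funext i
  simp only [Quiv.toZ, Pi.smul_apply, smul_eq_mul]
  push_cast
  ring

lemma chiSub_sum_sum {ι κ : Type*} (Q : Quiv n) (V : Finset (Fin n)) (A : Finset (Fin Q.m))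
    (S : Finset ι) (T : Finset κ) (f : ι → Fin n → ℤ) (g : κ → Fin n → ℤ) :
    Q.chiSub V A (∑ u ∈ S, f u) (∑ v ∈ T, g v) =
      ∑ u ∈ S, ∑ v ∈ T, Q.chiSub V A (f u) (g v) := by
  simp only [Quiv.chiSub, Finset.sum_apply, Finset.sum_mul_sum, Finset.sum_sub_distrib]
  congr 1
  · rw [Finset.sum_comm]
    exact Finset.sum_congr rfl fun u _ => Finset.sum_comm
  · rw [Finset.sum_comm]
    exact Finset.sum_congr rfl fun u _ => Finset.sum_comm

lemma chiSub_smul_smul (Q : Quiv n) (V : Finset (Fin n)) (A : Finset (Fin Q.m))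
    (k l : ℤ) (x y : Fin n → ℤ) :
    Q.chiSub V A (k • x) (l • y) = k * l * Q.chiSub V A x y := by
  simp only [Quiv.chiSub, Pi.smul_apply, smul_eq_mul]
  rw [show (∑ i ∈ V, k * x i * (l * y i)) = k * l * ∑ i ∈ V, x i * y i by
        rw [Finset.mul_sum]; exact Finset.sum_congr rfl fun _ _ => by ring,
      show (∑ a ∈ A, k * x (Q.ta a) * (l * y (Q.ha a)))
          = k * l * ∑ a ∈ A, x (Q.ta a) * y (Q.ha a) by
        rw [Finset.mul_sum]; exact Finset.sum_congr rfl fun _ _ => by ring]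
  ring

lemma chiSub_sub_expand (Q : Quiv n) (V : Finset (Fin n)) (A : Finset (Fin Q.m))
    (x y : Fin n → ℤ) :
    Q.chiSub V A (x - y) (x - y) =
      Q.chiSub V A x x - Q.chiSub V A x y - Q.chiSub V A y x + Q.chiSub V A y y := by
  simp only [Quiv.chiSub, Pi.sub_apply, sub_mul, mul_sub, Finset.sum_sub_distrib]
  ring

lemma chi_sum_sum {ι κ : Type*} (Q : Quiv n) (S : Finset ι) (T : Finset κ)
    (f : ι → Fin n → ℤ) (g : κ → Fin n → ℤ) :
    Q.chi (∑ u ∈ S, f u) (∑ v ∈ T, g v) = ∑ u ∈ S, ∑ v ∈ T, Q.chi (f u) (g v) :=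
  chiSub_sum_sum Q _ _ S T f g

lemma chi_smul_smul (Q : Quiv n) (k l : ℤ) (x y : Fin n → ℤ) :
    Q.chi (k • x) (l • y) = k * l * Q.chi x y :=
  chiSub_smul_smul Q _ _ k l x y

lemma chi_smul_left (Q : Quiv n) (k : ℤ) (x y : Fin n → ℤ) :
    Q.chi (k • x) y = k * Q.chi x y := by
  have := chi_smul_smul Q k 1 x y
  rw [one_smul] at this
  rw [this]; ring

lemma chi_smul_right (Q : Quiv n) (k : ℤ) (x y : Fin n → ℤ) :
    Q.chi x (k • y) = k * Q.chi x y := by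
  have := chi_smul_smul Q 1 k x y
  rw [one_smul] at this
  rw [this]; ring

lemma lam_smul_smul (Q : Quiv n) (k l : ℤ) (x y : Fin n → ℤ) :
    Q.lam (k • x) (l • y) = k * l * Q.lam x y := by
  simp only [Quiv.lam, chi_smul_smul]
  ring

lemma lam_nsmul_nsmul (Q : Quiv n) (k l : ℕ) (x y : Fin n → ℕ) :
    Q.lam (toZ (k • x)) (toZ (l • y)) = (k : ℤ) * l * Q.lam (toZ x) (toZ y) := by
  rw [toZ_nsmul, toZ_nsmul, lam_smul_smul]

lemma lam_sum_right {ι : Type*} (Q : Quiv n) (T : Finset ι) (x : Fin n → ℤ)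
    (g : ι → Fin n → ℤ) :
    Q.lam x (∑ v ∈ T, g v) = ∑ v ∈ T, Q.lam x (g v) := by
  have h1 : Q.chi x (∑ v ∈ T, g v) = ∑ v ∈ T, Q.chi x (g v) := by
    have := chi_sum_sum Q {()} T (fun _ => x) g
    simpa using this
  have h2 : Q.chi (∑ v ∈ T, g v) x = ∑ v ∈ T, Q.chi (g v) x := by
    have := chi_sum_sum Q T {()} g (fun _ => x)
    simpa using this
  simp only [Quiv.lam, h1, h2, Finset.sum_sub_distrib]

lemma lam_self_nsmul (Q : Quiv n) (k : ℕ) (x : Fin n → ℕ) :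
    Q.lam (toZ x) (toZ (k • x)) = 0 := by
  rw [toZ_nsmul]
  simp only [Quiv.lam, chi_smul_left, chi_smul_right]
  ring

end S4

namespace S4

variable {n : ℕ}

noncomputable def ind (β : Fin n → ℕ) : AQ n := fun δ => if δ = β then 1 else 0

lemma yQ_eq (β : Fin n → ℕ) : yQ β = fun δ => (-1 : RatFunc ℚ) * ind β δ := by
  funext δ
  simp only [yQ, ind]
  split <;> simp

lemma oneQ_eq : (oneQ : AQ n) = fun δ => (1 : RatFunc ℚ) * ind 0 δ := by
  funext δ
  simp [oneQ, ind]

lemma mul_sm (Q : Quiv n) (x y : RatFunc ℚ) (a b : Fin n → ℕ) :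
    mulQ Q (fun δ => x * ind a δ) (fun δ => y * ind b δ) =
      fun δ => (tq ^ (Q.lam (toZ a) (toZ b)) * (x * y)) * ind (a + b) δ := by
  funext δ
  show (∑ γ₁ ∈ Finset.Iic δ,
      tq ^ (Q.lam (toZ γ₁) (toZ (δ - γ₁))) * (x * ind a γ₁) * (y * ind b (δ - γ₁))) = _
  by_cases hle : a ≤ δ
  · rw [Finset.sum_eq_single a]
    · by_cases heq : δ = a + b
      · subst heq
        have h1 : a + b - a = b := by funext i; simp
        simp [ind, h1]
        ring
      · have h2 : δ - a ≠ b := by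
          intro h
          apply heq
          funext i
          have h3 := congrFun h i
          have h4 : a i ≤ δ i := hle i
          simp only [Pi.sub_apply, Pi.add_apply] at h3 ⊢
          omega
        simp [ind, h2, heq]
    · intro γ₁ _ hne
      simp [ind, hne]
    · intro ha
      exact (ha (Finset.mem_Iic.mpr hle)).elim
  · have h2 : δ ≠ a + b := by
      intro h
      exact hle (h ▸ le_add_right le_rfl)
    rw [Finset.sum_eq_zero, eq_comm]
    · simp [ind, h2]
    · intro γ₁ hγ₁
      have : γ₁ ≠ a := by
        rintro rfl
        exact hle (Finset.mem_Iic.mp hγ₁)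
      simp [ind, this]

lemma powQ_yQ (Q : Quiv n) (β : Fin n → ℕ) (k : ℕ) :
    powQ Q (yQ β) k = fun δ => ((-1 : RatFunc ℚ) ^ k) * ind (k • β) δ := by
  induction k with
  | zero =>
      show oneQ = _
      rw [oneQ_eq]
      simp
  | succ k ih =>
      show mulQ Q (yQ β) (powQ Q (yQ β) k) = _
      rw [ih, yQ_eq, mul_sm, lam_self_nsmul]
      funext δ
      have h1 : β + k • β = (k + 1) • β := by
        funext i
        simp only [Pi.add_apply, Pi.smul_apply, smul_eq_mul]
        ring
      rw [h1]
      simp [pow_succ]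
      try ring

end S4

namespace S4

variable {n : ℕ}

lemma W_succ {s : ℕ} (Q : Quiv n) (g : Fin (s + 1) → (Fin n → ℕ)) :
    (∑ u : Fin (s + 1), ∑ v : Fin (s + 1),
        if u < v then Q.lam (toZ (g u)) (toZ (g v)) else 0)
      = Q.lam (toZ (g 0)) (toZ (∑ v : Fin s, g v.succ)) +
        ∑ u : Fin s, ∑ v : Fin s,
          if u < v then Q.lam (toZ (g u.succ)) (toZ (g v.succ)) else 0 := by
  rw [Fin.sum_univ_succ]
  congr 1
  · rw [Fin.sum_univ_succ]
    simp only [lt_irrefl, if_false, Fin.succ_pos, if_true, zero_add]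
    rw [toZ_sum, lam_sum_right]
  · refine Finset.sum_congr rfl fun u _ => ?_
    rw [Fin.sum_univ_succ]
    simp [Fin.succ_lt_succ_iff]

lemma prod_sm (Q : Quiv n) : ∀ (s : ℕ) (c : Fin s → RatFunc ℚ) (g : Fin s → (Fin n → ℕ)),
    prodQ Q (List.ofFn (fun u => fun δ => c u * ind (g u) δ)) =
      fun δ => (tq ^ (∑ u : Fin s, ∑ v : Fin s,
          if u < v then Q.lam (toZ (g u)) (toZ (g v)) else 0) *
        ∏ u : Fin s, c u) * ind (∑ u : Fin s, g u) δ
  | 0, c, g => by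
      show oneQ = _
      rw [oneQ_eq]
      simp
  | s + 1, c, g => by
      rw [List.ofFn_succ]
      show mulQ Q _ (prodQ Q _) = _
      rw [prod_sm Q s (fun u => c u.succ) (fun u => g u.succ), mul_sm, W_succ]
      rw [Fin.sum_univ_succ (f := g), Fin.prod_univ_succ (f := c)]
      funext δ
      rw [zpow_add₀ tq_ne]
      ring

end S4

namespace S4

variable {n : ℕ}

lemma sum_decomp {r : ℕ} (f : Fin r → Fin r → ℤ) :
    ∑ u : Fin r, ∑ v : Fin r, f u v =
      (∑ u : Fin r, f u u) +
        ∑ u : Fin r, ∑ v : Fin r, (if u < v then f u v + f v u else 0) := by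
  have h1 : ∀ u v : Fin r, f u v =
      (if u < v then f u v else 0) + (if v < u then f u v else 0)
        + (if u = v then f u v else 0) := by
    intro u v
    rcases lt_trichotomy u v with h | h | h
    · simp [h, asymm h, h.ne]
    · simp [h, lt_irrefl]
    · simp [h, asymm h, h.ne']
  calc ∑ u : Fin r, ∑ v : Fin r, f u v
      = ∑ u : Fin r, ∑ v : Fin r, ((if u < v then f u v else 0)
          + (if v < u then f u v else 0) + (if u = v then f u v else 0)) := by
        exact Finset.sum_congr rfl fun u _ => Finset.sum_congr rfl fun v _ => h1 u v
    _ = (∑ u : Fin r, ∑ v : Fin r, if u < v then f u v else 0)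
          + (∑ u : Fin r, ∑ v : Fin r, if v < u then f u v else 0)
          + (∑ u : Fin r, ∑ v : Fin r, if u = v then f u v else 0) := by
        simp [Finset.sum_add_distrib]
    _ = (∑ u : Fin r, ∑ v : Fin r, if u < v then f u v else 0)
          + (∑ u : Fin r, ∑ v : Fin r, if u < v then f v u else 0)
          + (∑ u : Fin r, f u u) := by
        congr 1
        · congr 1
          exact Finset.sum_comm
        · exact Finset.sum_congr rfl fun u _ => by
            rw [Finset.sum_ite_eq _ u (f u)]; simp
    _ = _ := by
        rw [show ∀ A B C : ℤ, A + B + C = C + (A + B) from fun A B C => by ring]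
        congr 1
        rw [← Finset.sum_add_distrib]
        refine Finset.sum_congr rfl fun u _ => ?_
        rw [← Finset.sum_add_distrib]
        refine Finset.sum_congr rfl fun v _ => ?_
        split <;> simp


variable {ℓ : ℕ} {Q : Quiv n}

lemma block_eq (P : DSP Q ℓ) {j j' : Fin ℓ} {i : Fin n}
    (h : i ∈ P.V j) (h' : i ∈ P.V j') : j = j' := by
  obtain ⟨j₀, -, hu⟩ := P.cover i
  rw [hu j h, hu j' h']

lemma arrow_in_block (P : DSP Q ℓ) (hadm : P.Admissible) {j : Fin ℓ} {a : Fin Q.m}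
    (ht : Q.ta a ∈ P.V j) (hh : Q.ha a ∈ P.V j) : a ∈ P.A j := by
  by_contra hnA
  have hcut : P.Cut a := by
    intro j' hj'
    obtain ⟨h1, h2⟩ := (P.dynkin j').2.1 a hj'
    exact hnA (block_eq P h1 ht ▸ hj')
  exact hadm ⟨0, fun _ => a, fun _ => hcut, fun _ => ⟨j, hh, ht⟩⟩

lemma root_block (P : DSP Q ℓ) {j : Fin ℓ} {β : Fin n → ℕ}
    (hβ : β ∈ Q.PosRootsOn (P.V j) (P.A j)) {i : Fin n} (hi : β i ≠ 0) : i ∈ P.V j := by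
  by_contra h
  exact hi (hβ.2.1 i h)

lemma chi_eq_chiSub (P : DSP Q ℓ) (hadm : P.Admissible) {j : Fin ℓ} {x y : Fin n → ℤ}
    (hx : ∀ i, i ∉ P.V j → x i = 0) (hy : ∀ i, i ∉ P.V j → y i = 0) :
    Q.chi x y = Q.chiSub (P.V j) (P.A j) x y := by
  unfold Quiv.chi Quiv.chiSub
  congr 1
  · refine (Finset.sum_subset (Finset.subset_univ _) ?_).symm
    intro i _ hi
    rw [hx i hi, zero_mul]
  · refine (Finset.sum_subset (Finset.subset_univ _) ?_).symm
    intro a _ ha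
    by_cases h1 : Q.ta a ∈ P.V j
    · by_cases h2 : Q.ha a ∈ P.V j
      · exact absurd (arrow_in_block P hadm h1 h2) ha
      · rw [hy _ h2, mul_zero]
    · rw [hx _ h1, zero_mul]

lemma toZ_supp {β : Fin n → ℕ} {V : Finset (Fin n)} (h : ∀ i, i ∉ V → β i = 0) :
    ∀ i, i ∉ V → toZ β i = 0 := by
  intro i hi
  simp [Quiv.toZ, h i hi]

lemma chi_root_self (P : DSP Q ℓ) (hadm : P.Admissible) {j : Fin ℓ} {β : Fin n → ℕ}
    (hβ : β ∈ Q.PosRootsOn (P.V j) (P.A j)) :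
    Q.chi (toZ β) (toZ β) = 1 := by
  rw [chi_eq_chiSub P hadm (toZ_supp hβ.2.1) (toZ_supp hβ.2.1)]
  exact hβ.2.2

lemma chi_le_zero {r : ℕ} (P : DSP Q ℓ) (hadm : P.Admissible)
    {φ : Fin r → (Fin n → ℕ)} (hφ : P.AllowedOrder φ) {u v : Fin r} (huv : u < v) :
    Q.chi (toZ (φ u)) (toZ (φ v)) ≤ 0 := by
  have hmemu : φ u ∈ P.Roots := by rw [← hφ.2.1]; exact ⟨u, rfl⟩
  have hmemv : φ v ∈ P.Roots := by rw [← hφ.2.1]; exact ⟨v, rfl⟩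
  obtain ⟨ju, hju⟩ := Set.mem_iUnion.mp hmemu
  obtain ⟨jv, hjv⟩ := Set.mem_iUnion.mp hmemv
  by_cases hsame : ∃ j, φ u ∈ Q.PosRootsOn (P.V j) (P.A j) ∧
      φ v ∈ Q.PosRootsOn (P.V j) (P.A j)
  · obtain ⟨j, hu, hv⟩ := hsame
    have hlam : 0 ≤ Q.lam (toZ (φ u)) (toZ (φ v)) :=
      (hφ.2.2 u v huv).1 ⟨j, hu, hv⟩
    have huu : Q.chi (toZ (φ u)) (toZ (φ u)) = 1 := chi_root_self P hadm hu
    have hvv : Q.chi (toZ (φ v)) (toZ (φ v)) = 1 := chi_root_self P hadm hv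
    have huv' : Q.chi (toZ (φ u)) (toZ (φ v))
        = Q.chiSub (P.V j) (P.A j) (toZ (φ u)) (toZ (φ v)) :=
      chi_eq_chiSub P hadm (toZ_supp hu.2.1) (toZ_supp hv.2.1)
    have hvu' : Q.chi (toZ (φ v)) (toZ (φ u))
        = Q.chiSub (P.V j) (P.A j) (toZ (φ v)) (toZ (φ u)) :=
      chi_eq_chiSub P hadm (toZ_supp hv.2.1) (toZ_supp hu.2.1)
    have huu' : Q.chiSub (P.V j) (P.A j) (toZ (φ u)) (toZ (φ u)) = 1 := hu.2.2
    have hvv' : Q.chiSub (P.V j) (P.A j) (toZ (φ v)) (toZ (φ v)) = 1 := hv.2.2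
    have hne : toZ (φ u) - toZ (φ v) ≠ 0 := by
      intro h
      have : φ u = φ v := by
        funext i
        have := congrFun h i
        simp only [Pi.sub_apply, Pi.zero_apply, Quiv.toZ, sub_eq_zero] at this
        exact_mod_cast this
      exact (huv.ne (hφ.1 this))
    have hsupp : ∀ i, i ∉ P.V j → (toZ (φ u) - toZ (φ v)) i = 0 := by
      intro i hi
      simp [toZ_supp hu.2.1 i hi, toZ_supp hv.2.1 i hi]
    have hpd := (P.dynkin j).2.2.2.2 _ hsupp hne
    rw [chiSub_sub_expand] at hpd
    rw [huv']
    simp only [Quiv.lam, huv', hvu'] at hlam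
    omega
  · have hjune : ju ≠ jv := by
      rintro rfl
      exact hsame ⟨ju, hju, hjv⟩
    unfold Quiv.chi Quiv.chiSub
    have h1 : (∑ i : Fin n, toZ (φ u) i * toZ (φ v) i) = 0 := by
      refine Finset.sum_eq_zero fun i _ => ?_
      by_cases hi : φ u i = 0
      · simp [Quiv.toZ, hi]
      · have hiu : i ∈ P.V ju := root_block P hju hi
        have hiv : i ∉ P.V jv := fun h => hjune (block_eq P hiu h)
        simp [Quiv.toZ, hjv.2.1 i hiv]
    rw [h1]
    simp only [zero_sub, neg_nonpos]
    refine Finset.sum_nonneg fun a _ => ?_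
    exact mul_nonneg (by simp [Quiv.toZ]) (by simp [Quiv.toZ])

end S4

namespace S4

variable {n : ℕ}

lemma toZ_single (i : Fin n) : toZ (Pi.single i 1) = fun k => if k = i then (1:ℤ) else 0 := by
  funext k
  simp [Quiv.toZ, Pi.single_apply]

lemma chi_single_diag (Q : Quiv n) (hlt : ∀ a : Fin Q.m, Q.ha a < Q.ta a) (i : Fin n) :
    Q.chi (toZ (Pi.single i 1)) (toZ (Pi.single i 1)) = 1 := by
  rw [toZ_single]
  unfold Quiv.chi Quiv.chiSub
  have h1 : (∑ k : Fin n, (if k = i then (1:ℤ) else 0) * (if k = i then (1:ℤ) else 0)) = 1 := by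
    have : ∀ k : Fin n, (if k = i then (1:ℤ) else 0) * (if k = i then (1:ℤ) else 0)
        = if k = i then (1:ℤ) else 0 := fun k => by split <;> simp
    rw [Finset.sum_congr rfl fun k _ => this k, Finset.sum_ite_eq' Finset.univ i (fun _ => (1:ℤ))]
    simp
  rw [h1]
  have h2 : (∑ a : Fin Q.m, (if Q.ta a = i then (1:ℤ) else 0) * (if Q.ha a = i then (1:ℤ) else 0)) = 0 := by
    refine Finset.sum_eq_zero fun a _ => ?_
    have := hlt a
    by_cases h : Q.ta a = i
    · have h2 : Q.ha a ≠ i := fun he => absurd (hlt a) (by rw [he, h]; exact lt_irrefl i)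
      simp [h2]
    · simp [h]
  rw [h2]
  ring


lemma chi_single_lt (Q : Quiv n) (hlt : ∀ a : Fin Q.m, Q.ha a < Q.ta a) {i i' : Fin n}
    (hii : i < i') :
    Q.chi (toZ (Pi.single i 1)) (toZ (Pi.single i' 1)) = 0 := by
  rw [toZ_single, toZ_single]
  unfold Quiv.chi Quiv.chiSub
  have h1 : (∑ k : Fin n, (if k = i then (1:ℤ) else 0) * (if k = i' then (1:ℤ) else 0)) = 0 := by
    refine Finset.sum_eq_zero fun k _ => ?_
    by_cases h : k = i
    · have : k ≠ i' := by rw [h]; exact hii.ne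
      simp [this]
    · simp [h]
  have h2 : (∑ a : Fin Q.m, (if Q.ta a = i then (1:ℤ) else 0) * (if Q.ha a = i' then (1:ℤ) else 0)) = 0 := by
    refine Finset.sum_eq_zero fun a _ => ?_
    by_cases h : Q.ta a = i
    · have h3 : Q.ha a ≠ i' := by
        intro he
        have := hlt a
        rw [he, h] at this
        exact absurd hii (not_lt.mpr this.le)
      simp [h3]
    · simp [h]
  rw [h1, h2]
  ring

lemma sum_smul_single (γ : Fin n → ℕ) :
    (∑ i : Fin n, γ i • Pi.single i 1) = γ := by
  funext j
  rw [Finset.sum_apply]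
  have h1 : ∀ i : Fin n, (γ i • (Pi.single i 1 : Fin n → ℕ)) j = if j = i then γ i else 0 := by
    intro i
    simp only [Pi.smul_apply, Pi.single_apply, smul_eq_mul]
    split <;> simp
  rw [Finset.sum_congr rfl fun i _ => h1 i, Finset.sum_ite_eq Finset.univ j γ]
  simp

lemma neg_one_zpow_sub (M N : ℕ) :
    ((-1 : RatFunc ℚ)) ^ ((N : ℤ) - (M : ℤ)) * (-1) ^ N = (-1) ^ M := by
  have hne : (-1 : RatFunc ℚ) ≠ 0 := by norm_num
  have hinv : ((-1 : RatFunc ℚ) ^ M)⁻¹ = (-1) ^ M := by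
    rw [← inv_pow, inv_neg, inv_one]
  have hsq : ((-1 : RatFunc ℚ)) ^ N * (-1) ^ N = 1 := by
    rw [← pow_add]
    exact Even.neg_one_pow ⟨N, rfl⟩
  rw [zpow_sub₀ hne, zpow_natCast, zpow_natCast, div_eq_mul_inv, hinv]
  calc (-1 : RatFunc ℚ) ^ N * (-1) ^ M * (-1) ^ N
      = ((-1 : RatFunc ℚ) ^ N * (-1) ^ N) * (-1) ^ M := by ring
    _ = (-1) ^ M := by rw [hsq, one_mul]

end S4

end S4Aux

open Quiv S4 in
/-- For a compatible Kostant series `m ⊢ γ`,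
`y_{φ₁}^{m₁} ⋯ y_{φ_r}^{m_r} = (−1)^{s_m} t^{2w_m} y_{e₁}^{γ(1)} ⋯ y_{e_n}^{γ(n)}`
in the quantum algebra, and the integer `2w_m − Σ_i γ(i)² + Σ_u m_u²` is even
and nonnegative (twice the complex codimension of the stratum `η_m`). -/
theorem statement4 {n ℓ r : ℕ} (Q : Quiv n)
    (hlt : ∀ a : Fin Q.m, Q.ha a < Q.ta a)
    (P : Quiv.DSP Q ℓ) (hadm : P.Admissible)
    (φ : Fin r → (Fin n → ℕ)) (hφ : P.AllowedOrder φ)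
    (γ : Fin n → ℕ) (μ : Fin r → ℕ)
    (hks : ∑ u : Fin r, μ u • φ u = γ) :
    (prodQ Q (List.ofFn fun u : Fin r => powQ Q (yQ (φ u)) (μ u)) =
      fun δ => ((-1 : RatFunc ℚ) ^ (smExp φ μ) * tq ^ (w2Exp Q φ μ γ)) *
        prodQ Q (List.ofFn fun i : Fin n => powQ Q (yQ (Pi.single i 1)) (γ i)) δ) ∧
    ∃ c : ℕ, w2Exp Q φ μ γ - (∑ i : Fin n, (γ i : ℤ) ^ 2) +
        (∑ u : Fin r, (μ u : ℤ) ^ 2) = 2 * (c : ℤ) := by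
  have hNat : ∀ i, (γ i : ℤ) = ∑ u : Fin r, (μ u : ℤ) * (φ u i : ℤ) := by
    intro i
    rw [← hks, Finset.sum_apply]
    push_cast [Pi.smul_apply, smul_eq_mul]
    rfl
  -- abbreviations
  set WL : ℤ := ∑ u : Fin r, ∑ v : Fin r,
      if u < v then Q.lam (toZ (μ u • φ u)) (toZ (μ v • φ v)) else 0 with hWLdef
  set WR : ℤ := ∑ i : Fin n, ∑ i' : Fin n,
      if i < i' then Q.lam (toZ (γ i • Pi.single i 1)) (toZ (γ i' • Pi.single i' 1)) else 0
    with hWRdef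
  have hWL : WL = ∑ u : Fin r, ∑ v : Fin r, if u < v then
      (μ u : ℤ) * (μ v : ℤ) * Q.lam (toZ (φ u)) (toZ (φ v)) else 0 := by
    refine Finset.sum_congr rfl fun u _ => Finset.sum_congr rfl fun v _ => ?_
    split
    · rw [lam_nsmul_nsmul]
    · rfl
  have hWR : WR = ∑ i : Fin n, ∑ i' : Fin n, if i < i' then
      (γ i : ℤ) * (γ i' : ℤ) *
        Q.lam (toZ (Pi.single i 1)) (toZ (Pi.single i' 1)) else 0 := by
    refine Finset.sum_congr rfl fun i _ => Finset.sum_congr rfl fun i' _ => ?_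
    split
    · rw [lam_nsmul_nsmul]
    · rfl
  have hw2 : w2Exp Q φ μ γ = WL - WR := by
    rw [hWL, hWR]; rfl
  have hsm : smExp φ μ = ((∑ i : Fin n, γ i : ℕ) : ℤ) - ((∑ u : Fin r, μ u : ℕ) : ℤ) := by
    unfold smExp
    have h0 : ∀ u : Fin r, (μ u : ℤ) * ((∑ i : Fin n, (φ u i : ℤ)) - 1)
        = (μ u : ℤ) * (∑ i : Fin n, (φ u i : ℤ)) - (μ u : ℤ) := fun u => by ring
    rw [Finset.sum_congr rfl fun u _ => h0 u, Finset.sum_sub_distrib]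
    congr 1
    · push_cast
      calc ∑ u : Fin r, (μ u : ℤ) * ∑ i : Fin n, (φ u i : ℤ)
          = ∑ u : Fin r, ∑ i : Fin n, (μ u : ℤ) * (φ u i : ℤ) :=
            Finset.sum_congr rfl fun u _ => Finset.mul_sum _ _ _
        _ = ∑ i : Fin n, ∑ u : Fin r, (μ u : ℤ) * (φ u i : ℤ) := Finset.sum_comm
        _ = ∑ i : Fin n, (γ i : ℤ) := Finset.sum_congr rfl fun i _ => (hNat i).symm
    · push_cast
      rfl
  constructor
  · -- Part 1
    have L1 : (List.ofFn fun u : Fin r => powQ Q (yQ (φ u)) (μ u))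
        = List.ofFn (fun u : Fin r =>
            fun δ => ((-1 : RatFunc ℚ)) ^ (μ u) * ind (μ u • φ u) δ) := by
      congr 1
      funext u
      exact powQ_yQ Q (φ u) (μ u)
    have L2 : (List.ofFn fun i : Fin n => powQ Q (yQ (Pi.single i 1)) (γ i))
        = List.ofFn (fun i : Fin n =>
            fun δ => ((-1 : RatFunc ℚ)) ^ (γ i) * ind (γ i • Pi.single i 1) δ) := by
      congr 1
      funext i
      exact powQ_yQ Q _ _
    have hPL : prodQ Q (List.ofFn (fun u : Fin r =>
          fun δ => ((-1 : RatFunc ℚ)) ^ (μ u) * ind (μ u • φ u) δ)) =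
        fun δ => (tq ^ WL * ∏ u : Fin r, ((-1 : RatFunc ℚ)) ^ (μ u)) *
          ind (∑ u : Fin r, μ u • φ u) δ :=
      prod_sm Q r _ _
    have hPR : prodQ Q (List.ofFn (fun i : Fin n =>
          fun δ => ((-1 : RatFunc ℚ)) ^ (γ i) * ind (γ i • Pi.single i 1) δ)) =
        fun δ => (tq ^ WR * ∏ i : Fin n, ((-1 : RatFunc ℚ)) ^ (γ i)) *
          ind (∑ i : Fin n, γ i • Pi.single i 1) δ :=
      prod_sm Q n _ _
    rw [L1, hPL, L2]
    funext δ
    rw [hPR, hks, sum_smul_single]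
    have hM : (∏ u : Fin r, ((-1 : RatFunc ℚ)) ^ (μ u)) = (-1) ^ (∑ u : Fin r, μ u) :=
      Finset.prod_pow_eq_pow_sum _ _ _
    have hN : (∏ i : Fin n, ((-1 : RatFunc ℚ)) ^ (γ i)) = (-1) ^ (∑ i : Fin n, γ i) :=
      Finset.prod_pow_eq_pow_sum _ _ _
    have h1 : tq ^ (w2Exp Q φ μ γ) * tq ^ WR = tq ^ WL := by
      rw [← zpow_add₀ tq_ne, hw2, sub_add_cancel]
    have h2 : ((-1 : RatFunc ℚ)) ^ (smExp φ μ) * (-1) ^ (∑ i : Fin n, γ i)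
        = (-1) ^ (∑ u : Fin r, μ u) := by
      rw [hsm]
      exact neg_one_zpow_sub _ _
    rw [hM, hN, ← h1, ← h2]
    ring
  · -- Part 2
    have hCdiag : ∀ u : Fin r, Q.chi (toZ (φ u)) (toZ (φ u)) = 1 := by
      intro u
      have : φ u ∈ P.Roots := by rw [← hφ.2.1]; exact ⟨u, rfl⟩
      obtain ⟨j, hj⟩ := Set.mem_iUnion.mp this
      exact chi_root_self P hadm hj
    have hCle : ∀ u v : Fin r, u < v → Q.chi (toZ (φ u)) (toZ (φ v)) ≤ 0 :=
      fun u v h => chi_le_zero P hadm hφ h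
    set T : ℤ := ∑ u : Fin r, ∑ v : Fin r,
        if u < v then (μ u : ℤ) * (μ v : ℤ) * (-(Q.chi (toZ (φ u)) (toZ (φ v)))) else 0
      with hTdef
    have hT0 : 0 ≤ T := by
      refine Finset.sum_nonneg fun u _ => Finset.sum_nonneg fun v _ => ?_
      split
      · exact mul_nonneg (mul_nonneg (Int.natCast_nonneg _) (Int.natCast_nonneg _))
          (neg_nonneg.mpr (hCle u v (by assumption)))
      · exact le_refl 0
    refine ⟨T.toNat, ?_⟩
    rw [Int.toNat_of_nonneg hT0]
    -- notation for sums
    have htoZγ1 : toZ γ = ∑ u : Fin r, ((μ u : ℤ)) • toZ (φ u) := by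
      rw [← hks, toZ_sum]
      exact Finset.sum_congr rfl fun u _ => toZ_nsmul _ _
    have hchi1 : Q.chi (toZ γ) (toZ γ) =
        ∑ u : Fin r, ∑ v : Fin r, (μ u : ℤ) * (μ v : ℤ) *
          Q.chi (toZ (φ u)) (toZ (φ v)) := by
      rw [htoZγ1, chi_sum_sum]
      exact Finset.sum_congr rfl fun u _ => Finset.sum_congr rfl fun v _ =>
        chi_smul_smul Q _ _ _ _
    have htoZγ2 : toZ γ = ∑ i : Fin n, ((γ i : ℤ)) • toZ (Pi.single i 1) := by
      conv_lhs => rw [← sum_smul_single γ]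
      rw [toZ_sum]
      exact Finset.sum_congr rfl fun i _ => toZ_nsmul _ _
    have hchi2 : Q.chi (toZ γ) (toZ γ) =
        ∑ i : Fin n, ∑ i' : Fin n, (γ i : ℤ) * (γ i' : ℤ) *
          Q.chi (toZ (Pi.single i 1)) (toZ (Pi.single i' 1)) := by
      rw [htoZγ2, chi_sum_sum]
      exact Finset.sum_congr rfl fun i _ => Finset.sum_congr rfl fun i' _ =>
        chi_smul_smul Q _ _ _ _
    have hd1 := sum_decomp (fun u v : Fin r =>
      (μ u : ℤ) * (μ v : ℤ) * Q.chi (toZ (φ u)) (toZ (φ v)))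
    have hdiag1 : (∑ u : Fin r, (μ u : ℤ) * (μ u : ℤ) *
        Q.chi (toZ (φ u)) (toZ (φ u))) = ∑ u : Fin r, (μ u : ℤ) ^ 2 := by
      refine Finset.sum_congr rfl fun u _ => ?_
      rw [hCdiag u]; ring
    have hd2 := sum_decomp (fun i i' : Fin n =>
      (γ i : ℤ) * (γ i' : ℤ) * Q.chi (toZ (Pi.single i 1)) (toZ (Pi.single i' 1)))
    have hdiag2 : (∑ i : Fin n, (γ i : ℤ) * (γ i : ℤ) *
        Q.chi (toZ (Pi.single i 1)) (toZ (Pi.single i 1))) = ∑ i : Fin n, (γ i : ℤ) ^ 2 := by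
      refine Finset.sum_congr rfl fun i _ => ?_
      rw [chi_single_diag Q hlt i]; ring
    -- second w2Exp sum equals the off-diagonal part of hd2
    have hS2 : (∑ i : Fin n, ∑ i' : Fin n, if i < i' then
        (γ i : ℤ) * (γ i' : ℤ) *
          Q.lam (toZ (Pi.single i 1)) (toZ (Pi.single i' 1)) else 0) =
      ∑ i : Fin n, ∑ i' : Fin n, (if i < i' then
        (γ i : ℤ) * (γ i' : ℤ) * Q.chi (toZ (Pi.single i 1)) (toZ (Pi.single i' 1)) +
        (γ i' : ℤ) * (γ i : ℤ) * Q.chi (toZ (Pi.single i' 1)) (toZ (Pi.single i 1)) else 0) := by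
      refine Finset.sum_congr rfl fun i _ => Finset.sum_congr rfl fun i' _ => ?_
      split
      · rename_i h
        rw [Quiv.lam, chi_single_lt Q hlt h]
        ring
      · rfl
    -- first w2Exp sum minus off-diagonal part of hd1 equals 2T
    have hS1 : (∑ u : Fin r, ∑ v : Fin r, if u < v then
          (μ u : ℤ) * (μ v : ℤ) * Q.lam (toZ (φ u)) (toZ (φ v)) else 0) -
        (∑ u : Fin r, ∑ v : Fin r, (if u < v then
          (μ u : ℤ) * (μ v : ℤ) * Q.chi (toZ (φ u)) (toZ (φ v)) +
          (μ v : ℤ) * (μ u : ℤ) * Q.chi (toZ (φ v)) (toZ (φ u)) else 0)) = 2 * T := by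
      rw [hTdef, Finset.mul_sum, ← Finset.sum_sub_distrib]
      refine Finset.sum_congr rfl fun u _ => ?_
      rw [Finset.mul_sum, ← Finset.sum_sub_distrib]
      refine Finset.sum_congr rfl fun v _ => ?_
      split
      · rw [Quiv.lam]; ring
      · ring
    rw [hw2, hWL, hWR]
    linarith [hchi1, hchi2, hd1, hd2, hdiag1, hdiag2, hS1, hS2]
end

section
/- Let Q be an acyclic quiver with an admissible and ordered Dynkin subquiver partition Q• = {Q¹,…,Q^ℓ}. Then for all indices j < j' and all positive roots β ∈ Φ^j and β' ∈ Φ^{j'}, one has λ(β,β') ≤ 0. -/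
open scoped BigOperators

/-- For an admissible and ordered Dynkin subquiver partition of an
acyclic quiver, roots of earlier blocks pair nonpositively under `λ` with roots
of later blocks: `j < j'`, `β ∈ Φ^j`, `β' ∈ Φ^{j'}` imply `λ(β,β') ≤ 0`. -/
theorem statement6 {n ℓ : ℕ} (Q : Quiv n) (hacyc : Q.Acyclic)
    (P : Quiv.DSP Q ℓ) (hadm : P.Admissible) (hord : P.Ordered) :
    ∀ j j' : Fin ℓ, j < j' →
      ∀ β ∈ Q.PosRootsOn (P.V j) (P.A j), ∀ β' ∈ Q.PosRootsOn (P.V j') (P.A j'),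
        Q.lam (Quiv.toZ β) (Quiv.toZ β') ≤ 0 := by
  intro j j' hjj' β hβ β' hβ'
  obtain ⟨-, hsupp, -⟩ := hβ
  obtain ⟨-, hsupp', -⟩ := hβ'
  have hlam : Q.lam (Quiv.toZ β) (Quiv.toZ β') =
      ∑ a : Fin Q.m, ((β (Q.ta a) : ℤ) * (β' (Q.ha a)) -
        (β' (Q.ta a) : ℤ) * (β (Q.ha a))) := by
    simp only [Quiv.lam, Quiv.chi, Quiv.chiSub, Quiv.toZ]
    rw [Finset.sum_sub_distrib]
    have hcomm : ∑ i, (β' i : ℤ) * β i = ∑ i, (β i : ℤ) * β' i :=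
      Finset.sum_congr rfl fun i _ => mul_comm _ _
    rw [hcomm]; ring
  rw [hlam]
  apply Finset.sum_nonpos
  intro a _
  have h1 : (β (Q.ta a) : ℤ) * (β' (Q.ha a)) = 0 := by
    by_contra h
    have hta : β (Q.ta a) ≠ 0 := by
      intro h0; apply h; rw [h0]; simp
    have hha : β' (Q.ha a) ≠ 0 := by
      intro h0; apply h; rw [h0]; simp
    have hta' : Q.ta a ∈ P.V j := by
      by_contra hc; exact hta (hsupp _ hc)
    have hha' : Q.ha a ∈ P.V j' := by
      by_contra hc; exact hha (hsupp' _ hc)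
    -- a is a cut arrow
    have hcut : P.Cut a := by
      intro k hk
      obtain ⟨hta2, hha2⟩ := (P.dynkin k).2.1 a hk
      obtain ⟨w, hw, huniq⟩ := P.cover (Q.ta a)
      obtain ⟨w', hw', huniq'⟩ := P.cover (Q.ha a)
      have hjk : j = k := (huniq j hta').trans (huniq k hta2).symm
      have hj'k : j' = k := (huniq' j' hha').trans (huniq' k hha2).symm
      exact absurd (hjk.trans hj'k.symm) hjj'.ne
    exact absurd (hord a hcut j' j hha' hta') (not_lt.mpr (le_of_lt hjj'))
  rw [h1]
  simp [sub_nonpos]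
  positivity
end

section
/- Let Q be the equioriented A₃ quiver 1 ← 2 ← 3. Then in the completed quantum algebra Â_Q one has E(y_{α₁})·E(y_{α₂})·E(y_{α₃}) = E(y_{α₁})·E(y_{α₃})·E(y_{α₂+α₃})·E(y_{α₂}), where α_i = e_i. -/
open scoped BigOperators

/-- The equioriented `A₃` quiver `1 ← 2 ← 3` (vertices `0,1,2` of `Fin 3`
standing for `1,2,3`): arrows `2 → 1` and `3 → 2`. -/
def QA3 : Quiv 3 := ⟨2, ![1, 2], ![0, 1]⟩

/-!
Both sides start with `E(y_{α₁})`, so it suffices to prove the pentagon identity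
`E(y_{α₂}) E(y_{α₃}) = E(y_{α₃}) E(y_{α₂+α₃}) E(y_{α₂})`. Both sides vanish off the dimension
vectors `(0, b, c)`. There the left side is `t^{-bc} · t^{b²} P_b · t^{c²} P_c`, and on the right
side, with `k` the power of `y_{α₂+α₃}`, the coefficient becomes
`t^{b²+c²-bc} ∑ₖ q^{(b-k)(c-k)} P_{b-k} P_k P_{c-k}`. So everything reduces to the `q`-series identity
`∑ₖ q^{(b-k)(c-k)} P_{b-k} P_k P_{c-k} = P_b P_c`. It follows by induction on `c`: by
`P_{n-1} = (1 - q^n) P_n`, `(1 - q^{c+1})` times the `(k+1)`-st summand for `c + 1` is `q^{b-k-1}` times the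
`(k+1)`-st summand for `c` plus `1 - q^{b-k}` times the `k`-th one. Summing over `k`, each summand
for `c` gets total weight `1`.
-/

open Finset

lemma tq_ne_zero : tq ≠ 0 := RatFunc.X_ne_zero

lemma one_sub_tq_pow_ne_zero {j : ℕ} (hj : j ≠ 0) : (1 : RatFunc ℚ) - tq ^ j ≠ 0 := by
  rw [tq, ← RatFunc.algebraMap_X, ← map_pow, ← map_one (algebraMap (Polynomial ℚ) _), ← map_sub]
  refine RatFunc.algebraMap_ne_zero fun h => ?_
  simpa [Polynomial.coeff_one, hj] using congrArg (Polynomial.coeff · j) h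

lemma Pq_succ (k : ℕ) : Pq (k + 1) = Pq k * (1 - tq ^ (2 * (k + 1)))⁻¹ :=
  prod_Icc_succ_top (by omega) _

lemma Pq_eq_mul_Pq_succ (k : ℕ) : Pq k = (1 - tq ^ (2 * (k + 1))) * Pq (k + 1) := by
  rw [Pq_succ, mul_left_comm, mul_inv_cancel₀ (one_sub_tq_pow_ne_zero (by omega)), mul_one]

noncomputable def pentagonCoeff (b c k : ℕ) : RatFunc ℚ :=
  if k ≤ b ∧ k ≤ c then tq ^ (2 * ((b - k) * (c - k))) * (Pq (b - k) * Pq k * Pq (c - k)) else 0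

lemma pentagonCoeff_succ_zero (b c : ℕ) :
    (1 - tq ^ (2 * (c + 1))) * pentagonCoeff b (c + 1) 0 =
      tq ^ (2 * b) * pentagonCoeff b c 0 := by
  simp only [pentagonCoeff, zero_le, and_self, if_true, Nat.sub_zero, Pq_eq_mul_Pq_succ c]
  ring

lemma pentagonCoeff_succ_succ (b c k : ℕ) :
    (1 - tq ^ (2 * (c + 1))) * pentagonCoeff b (c + 1) (k + 1) =
      tq ^ (2 * (b - (k + 1))) * pentagonCoeff b c (k + 1) +
        (1 - tq ^ (2 * (b - k))) * pentagonCoeff b c k := by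
  unfold pentagonCoeff
  rcases Nat.lt_or_ge k b with hkb | hbk
  · obtain ⟨b, rfl⟩ := Nat.exists_eq_add_of_lt hkb
    rcases lt_trichotomy k c with hkc | rfl | hck
    · obtain ⟨c, rfl⟩ := Nat.exists_eq_add_of_lt hkc
      rw [if_pos (by omega), if_pos (by omega), if_pos (by omega)]
      simp only [show k + c + 1 + 1 - (k + 1) = c + 1 by omega,
        show k + c + 1 - (k + 1) = c by omega, show k + b + 1 - (k + 1) = b by omega,
        show k + c + 1 - k = c + 1 by omega, show k + b + 1 - k = b + 1 by omega,
        Pq_eq_mul_Pq_succ b, Pq_eq_mul_Pq_succ c, Pq_eq_mul_Pq_succ k]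
      ring
    · rw [if_pos (by omega), if_neg (by omega), if_pos (by omega)]
      simp only [Nat.sub_self, show k + b + 1 - (k + 1) = b by omega,
        show k + b + 1 - k = b + 1 by omega, Pq_eq_mul_Pq_succ b, Pq_eq_mul_Pq_succ k]
      ring
    · rw [if_neg (by omega), if_neg (by omega), if_neg (by omega)]
      ring
  · rw [if_neg (by omega), if_neg (by omega)]
    split_ifs with h
    · obtain rfl : k = b := by omega
      simp
    · simp

theorem sum_pentagonCoeff (b c : ℕ) :
    ∑ k ∈ range (c + 1), pentagonCoeff b c k = Pq b * Pq c := by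
  induction c with
  | zero => simp [pentagonCoeff, Pq]
  | succ c ih =>
    have hshift := sum_range_succ' (fun k => tq ^ (2 * (b - k)) * pentagonCoeff b c k) (c + 1)
    rw [sum_range_succ, show pentagonCoeff b c (c + 1) = 0 from if_neg (by omega), mul_zero,
      add_zero, Nat.sub_zero] at hshift
    have hstep : (1 - tq ^ (2 * (c + 1))) * ∑ k ∈ range (c + 1 + 1), pentagonCoeff b (c + 1) k =
        ∑ k ∈ range (c + 1), pentagonCoeff b c k := by
      rw [mul_sum, sum_range_succ', pentagonCoeff_succ_zero]
      simp only [pentagonCoeff_succ_succ, sum_add_distrib]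
      rw [add_right_comm, ← hshift, ← sum_add_distrib]
      exact sum_congr rfl fun k _ => by ring
    have hu := one_sub_tq_pow_ne_zero (j := 2 * (c + 1)) (by omega)
    rw [Pq_succ, ← mul_assoc, ← ih, ← hstep]
    field_simp

namespace Quiv

variable {n : ℕ}

lemma toZ_zero : toZ (0 : Fin n → ℕ) = 0 := rfl

lemma lam_zero_right (Q : Quiv n) (x : Fin n → ℤ) : Q.lam x 0 = 0 := by
  simp [lam, chi, chiSub]

end Quiv

open Quiv

section QuantumAlgebra

variable {n : ℕ}

lemma mulQ_oneQ (Q : Quiv n) (f : AQ n) : mulQ Q f oneQ = f := by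
  funext δ
  rw [mulQ, sum_eq_single_of_mem δ (mem_Iic.2 le_rfl)]
  · simp [oneQ, toZ_zero, lam_zero_right]
  · intro γ hγ hne
    have : δ - γ ≠ 0 := fun h => hne (le_antisymm (mem_Iic.1 hγ) (tsub_eq_zero_iff_le.1 h))
    simp [oneQ, this]

noncomputable def dilogCoeff (k : ℕ) : RatFunc ℚ := tq ^ (k ^ 2) * Pq k

lemma sum_range_ite_eq_smul {γ : Fin n → ℕ} {i : Fin n} (hγ : γ i = 1) {δ : Fin n → ℕ} {N : ℕ}
    (hN : δ i < N) (f : ℕ → RatFunc ℚ) :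
    ∑ k ∈ range N, (if δ = k • γ then f k else 0) = if δ = δ i • γ then f (δ i) else 0 := by
  refine sum_eq_single_of_mem _ (mem_range.2 hN) fun k _ hk => if_neg ?_
  rintro rfl
  simp [hγ] at hk

lemma Edl_apply {γ : Fin n → ℕ} {i : Fin n} (hγ : γ i = 1) (δ : Fin n → ℕ) :
    Edl γ δ = if δ = δ i • γ then dilogCoeff (δ i) else 0 :=
  sum_range_ite_eq_smul hγ
    (Nat.lt_succ_of_le (single_le_sum (fun j _ => Nat.zero_le (δ j)) (mem_univ i))) _

open Classical in
lemma mulQ_Edl_apply (Q : Quiv n) {γ : Fin n → ℕ} {i : Fin n} (hγ : γ i = 1) (g : AQ n)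
    (δ : Fin n → ℕ) :
    mulQ Q (Edl γ) g δ = ∑ k ∈ range (δ i + 1),
      if k • γ ≤ δ then
        tq ^ Q.lam (toZ (k • γ)) (toZ (δ - k • γ)) * dilogCoeff k * g (δ - k • γ)
      else 0 := by
  have hterm : ∀ γ₁ ∈ Iic δ, tq ^ Q.lam (toZ γ₁) (toZ (δ - γ₁)) * Edl γ γ₁ * g (δ - γ₁) =
      ∑ k ∈ range (δ i + 1), if γ₁ = k • γ then
        tq ^ Q.lam (toZ (k • γ)) (toZ (δ - k • γ)) * dilogCoeff k * g (δ - k • γ) else 0 := by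
    intro γ₁ hγ₁
    rw [sum_range_ite_eq_smul hγ (Nat.lt_succ_of_le (mem_Iic.1 hγ₁ i)), Edl_apply hγ]
    split_ifs with h
    · rw [← h]
    · simp
  rw [mulQ, sum_congr rfl hterm, sum_comm]
  refine sum_congr rfl fun k _ => ?_
  rw [sum_ite_eq' (Iic δ) (k • γ)]
  exact if_congr mem_Iic rfl rfl

end QuantumAlgebra

lemma lam_QA3 (x y : Fin 3 → ℕ) :
    QA3.lam (toZ x) (toZ y) = x 1 * y 0 - x 0 * y 1 + x 2 * y 1 - x 1 * y 2 := by
  simp only [lam, chi, chiSub, QA3, Fin.sum_univ_three]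
  erw [Fin.sum_univ_two, Fin.sum_univ_two]
  simp only [Quiv.toZ, Matrix.cons_val_zero, Matrix.cons_val_one, Matrix.cons_val_fin_one]
  ring

lemma vec3_le_iff {a b c d e f : ℕ} :
    (![a, b, c] : Fin 3 → ℕ) ≤ ![d, e, f] ↔ a ≤ d ∧ b ≤ e ∧ c ≤ f := by
  simp [Pi.le_def, Fin.forall_fin_succ]

lemma Edl_e2_apply (δ : Fin 3 → ℕ) :
    Edl ![0, 1, 0] δ = if δ 0 = 0 ∧ δ 2 = 0 then dilogCoeff (δ 1) else 0 := by
  rw [Edl_apply (i := 1) rfl]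
  simp [funext_iff, Fin.forall_fin_succ]

lemma Edl_e3_apply (δ : Fin 3 → ℕ) :
    Edl ![0, 0, 1] δ = if δ 0 = 0 ∧ δ 1 = 0 then dilogCoeff (δ 2) else 0 := by
  rw [Edl_apply (i := 2) rfl]
  simp [funext_iff, Fin.forall_fin_succ]

lemma mulQ_Edl_e2_Edl_e3_apply (a b c : ℕ) :
    mulQ QA3 (Edl ![0, 1, 0]) (Edl ![0, 0, 1]) ![a, b, c] =
      if a = 0 then (tq ^ (b * c))⁻¹ * (dilogCoeff b * dilogCoeff c) else 0 := by
  rw [mulQ_Edl_apply QA3 (i := 1) rfl]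
  change ∑ k ∈ range (b + 1), _ = _
  rw [sum_eq_single_of_mem b (self_mem_range_succ b)]
  · rcases eq_or_ne a 0 with rfl | ha <;>
      simp [vec3_le_iff, Edl_e3_apply, lam_QA3, mul_assoc, ← zpow_natCast, *]
  · intro k hk hkb
    have : b - k ≠ 0 := by rw [mem_range] at hk; omega
    simp [Edl_e3_apply, this]

lemma mulQ_Edl_e23_Edl_e2_apply (a b c : ℕ) :
    mulQ QA3 (Edl ![0, 1, 1]) (Edl ![0, 1, 0]) ![a, b, c] =
      if a = 0 ∧ c ≤ b then tq ^ (c * (b - c)) * (dilogCoeff c * dilogCoeff (b - c)) else 0 := by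
  rw [mulQ_Edl_apply QA3 (i := 2) rfl]
  change ∑ k ∈ range (c + 1), _ = _
  rw [sum_eq_single_of_mem c (self_mem_range_succ c)]
  · rcases eq_or_ne a 0 with rfl | ha
    · by_cases hcb : c ≤ b
      · simp [vec3_le_iff, Edl_e2_apply, lam_QA3, mul_assoc, ← zpow_natCast, hcb]
      · simp [vec3_le_iff, hcb]
    · simp [vec3_le_iff, Edl_e2_apply, ha]
  · intro k hk hkc
    have : c - k ≠ 0 := by rw [mem_range] at hk; omega
    simp [Edl_e2_apply, this]

lemma mulQ_Edl_e3_mulQ_Edl_e23_Edl_e2_apply (a b c : ℕ) :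
    mulQ QA3 (Edl ![0, 0, 1]) (mulQ QA3 (Edl ![0, 1, 1]) (Edl ![0, 1, 0])) ![a, b, c] =
      ∑ m ∈ range (c + 1), if a = 0 ∧ c - m ≤ b then
        tq ^ (m * b) * dilogCoeff m *
          (tq ^ ((c - m) * (b - (c - m))) * (dilogCoeff (c - m) * dilogCoeff (b - (c - m))))
      else 0 := by
  rw [mulQ_Edl_apply QA3 (i := 2) rfl]
  refine sum_congr rfl fun m hm => ?_
  have hmc : m ≤ c := Nat.lt_succ_iff.1 (mem_range.1 hm)
  simp [vec3_le_iff, mulQ_Edl_e23_Edl_e2_apply, lam_QA3, hmc, ← zpow_natCast]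

lemma sum_pentagon_QA3_coeff (b c : ℕ) :
    ∑ m ∈ range (c + 1), (if c - m ≤ b then
        tq ^ (m * b) * dilogCoeff m *
          (tq ^ ((c - m) * (b - (c - m))) * (dilogCoeff (c - m) * dilogCoeff (b - (c - m))))
      else 0) =
      (tq ^ (b * c))⁻¹ * (dilogCoeff b * dilogCoeff c) := by
  rw [eq_inv_mul_iff_mul_eq₀ (pow_ne_zero _ tq_ne_zero), ← sum_range_reflect, mul_sum,
    show dilogCoeff b * dilogCoeff c = tq ^ (b ^ 2 + c ^ 2) * (Pq b * Pq c) by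
      rw [dilogCoeff, dilogCoeff, pow_add]; ring,
    ← sum_pentagonCoeff, mul_sum]
  refine sum_congr rfl fun k hk => ?_
  have hkc : k ≤ c := Nat.lt_succ_iff.1 (mem_range.1 hk)
  rw [show c + 1 - 1 - k = c - k by omega, show c - (c - k) = k by omega, pentagonCoeff]
  by_cases hkb : k ≤ b
  · obtain ⟨b, rfl⟩ := Nat.exists_eq_add_of_le hkb
    obtain ⟨c, rfl⟩ := Nat.exists_eq_add_of_le hkc
    simp only [if_pos hkb, if_pos (And.intro hkb hkc), Nat.add_sub_cancel_left, dilogCoeff]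
    ring
  · simp [hkb]

theorem pentagon_QA3 :
    mulQ QA3 (Edl ![0, 1, 0]) (Edl ![0, 0, 1]) =
      mulQ QA3 (Edl ![0, 0, 1]) (mulQ QA3 (Edl ![0, 1, 1]) (Edl ![0, 1, 0])) := by
  funext δ
  obtain ⟨a, b, c, rfl⟩ : ∃ a b c, δ = ![a, b, c] :=
    ⟨δ 0, δ 1, δ 2, funext fun i => by fin_cases i <;> rfl⟩
  rw [mulQ_Edl_e2_Edl_e3_apply, mulQ_Edl_e3_mulQ_Edl_e23_Edl_e2_apply]
  rcases eq_or_ne a 0 with rfl | ha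
  · simpa using (sum_pentagon_QA3_coeff b c).symm
  · simp [ha]

/-- In `Â_Q` for the equioriented `A₃` quiver,
`E(y_{α₁})E(y_{α₂})E(y_{α₃}) = E(y_{α₁})E(y_{α₃})E(y_{α₂+α₃})E(y_{α₂})`. -/
theorem statement8 :
    prodQ QA3 [Edl ![1, 0, 0], Edl ![0, 1, 0], Edl ![0, 0, 1]] =
      prodQ QA3 [Edl ![1, 0, 0], Edl ![0, 0, 1], Edl ![0, 1, 1], Edl ![0, 1, 0]] := by
  simp only [prodQ, List.foldr, mulQ_oneQ, pentagon_QA3]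
end
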